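/- arXiv:1103.3937 — 3 statements merged into one kernel-verified Lean document; each statement's English description precedes it below -/
import Mathlib

section
/- Let ℓ1 and ℓ2 be primes different from 3 with ℓ1 ∣ w1 and ℓ2 ∣ w2. If a ∈ D, a ∉ {1, Q^12}, and gcd(ℓ1·ℓ2, a) = 1, then a is one of the following three numbers: (s/2)(Q-1)(Q+1)^2(Q^2-Q+1), Q^2(Q-1)^2(Q+1)^2(Q^2+1)^2/3, (s/2)·Q^6(Q-1)(Q+1)^2(Q^2-Q+1). -/
namespace Ree2F4

/-- `Q = q² = 2^(2m+1)`. -/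
def Q (m : ℕ) : ℕ := 2 ^ (2 * m + 1)
/-- `s = q·√2 = 2^(m+1)`. -/
def s (m : ℕ) : ℕ := 2 ^ (m + 1)
/-- `u1 = Q - s + 1`. -/
def u1 (m : ℕ) : ℕ := Q m - s m + 1
/-- `u2 = Q + s + 1`. -/
def u2 (m : ℕ) : ℕ := Q m + s m + 1
/-- `w1 = Q² + Q + 1 - s(Q+1)`. -/
def w1 (m : ℕ) : ℕ := (Q m) ^ 2 + Q m + 1 - s m * (Q m + 1)
/-- `w2 = Q² + Q + 1 + s(Q+1)`. -/
def w2 (m : ℕ) : ℕ := (Q m) ^ 2 + Q m + 1 + s m * (Q m + 1)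

set_option maxHeartbeats 2000000 in
/-- The set of irreducible complex character degrees of the simple Ree group
`²F₄(q²)`, `q² = 2^(2m+1)`, as computed by Malle/CHEVIE (all displayed quotients
are integers, so natural-number division is exact). -/
def D (m : ℕ) : Set ℕ :=
  { 1,
    s m / 2 * (Q m - 1) * (Q m + 1) ^ 2 * ((Q m) ^ 2 - Q m + 1),
    Q m * ((Q m) ^ 2 - Q m + 1) * ((Q m) ^ 4 - (Q m) ^ 2 + 1),
    (Q m - 1) * ((Q m) ^ 2 + 1) ^ 2 * ((Q m) ^ 4 - (Q m) ^ 2 + 1),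
    (Q m) ^ 2 * (u1 m) ^ 2 * w1 m * (Q m - 1) ^ 2 * ((Q m) ^ 2 - Q m + 1) / 12,
    (Q m) ^ 2 * (u2 m) ^ 2 * w2 m * (Q m - 1) ^ 2 * ((Q m) ^ 2 - Q m + 1) / 12,
    (Q m) ^ 2 * (Q m - 1) ^ 2 * (Q m + 1) ^ 2 * ((Q m) ^ 4 - (Q m) ^ 2 + 1) / 6,
    (Q m) ^ 2 * w1 m * (Q m - 1) ^ 2 * (Q m + 1) ^ 2 * ((Q m) ^ 2 - Q m + 1) / 4,
    (Q m) ^ 2 * (u1 m) ^ 2 * w2 m * (Q m + 1) ^ 2 * ((Q m) ^ 2 - Q m + 1) / 4,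
    (Q m) ^ 2 * w2 m * (Q m - 1) ^ 2 * (Q m + 1) ^ 2 * ((Q m) ^ 2 - Q m + 1) / 4,
    (Q m) ^ 2 * (u2 m) ^ 2 * w1 m * (Q m + 1) ^ 2 * ((Q m) ^ 2 - Q m + 1) / 4,
    (Q m) ^ 2 * (Q m - 1) ^ 2 * ((Q m) ^ 2 - Q m + 1) * ((Q m) ^ 4 - (Q m) ^ 2 + 1) / 3,
    (Q m) ^ 2 * (Q m - 1) ^ 2 * (Q m + 1) ^ 2 * ((Q m) ^ 2 + 1) ^ 2 / 3,
    (Q m) ^ 2 * ((Q m) ^ 2 + 1) ^ 2 * ((Q m) ^ 4 - (Q m) ^ 2 + 1) / 2,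
    u1 m * (Q m - 1) * (Q m + 1) ^ 2 * ((Q m) ^ 2 - Q m + 1) * ((Q m) ^ 4 - (Q m) ^ 2 + 1),
    (Q m + 1) ^ 2 * ((Q m) ^ 2 + 1) * ((Q m) ^ 2 - Q m + 1) * ((Q m) ^ 4 - (Q m) ^ 2 + 1),
    u2 m * (Q m - 1) * (Q m + 1) ^ 2 * ((Q m) ^ 2 - Q m + 1) * ((Q m) ^ 4 - (Q m) ^ 2 + 1),
    Q m * (Q m - 1) ^ 2 * ((Q m) ^ 2 + 1) ^ 2 * ((Q m) ^ 4 - (Q m) ^ 2 + 1),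
    (Q m - 1) * ((Q m) ^ 2 + 1) ^ 2 * ((Q m) ^ 2 - Q m + 1) * ((Q m) ^ 4 - (Q m) ^ 2 + 1),
    (Q m) ^ 5 * ((Q m) ^ 2 - Q m + 1) * ((Q m) ^ 4 - (Q m) ^ 2 + 1),
    (Q m + 1) * ((Q m) ^ 2 + 1) ^ 2 * ((Q m) ^ 2 - Q m + 1) * ((Q m) ^ 4 - (Q m) ^ 2 + 1),
    s m / 2 * u1 m * (Q m - 1) ^ 2 * (Q m + 1) ^ 2 * ((Q m) ^ 2 - Q m + 1) * ((Q m) ^ 4 - (Q m) ^ 2 + 1),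
    s m / 2 * (Q m) ^ 6 * (Q m - 1) * (Q m + 1) ^ 2 * ((Q m) ^ 2 - Q m + 1),
    s m / 2 * (Q m - 1) * (Q m + 1) ^ 2 * ((Q m) ^ 2 + 1) * ((Q m) ^ 2 - Q m + 1) * ((Q m) ^ 4 - (Q m) ^ 2 + 1),
    s m / 2 * u2 m * (Q m - 1) ^ 2 * (Q m + 1) ^ 2 * ((Q m) ^ 2 - Q m + 1) * ((Q m) ^ 4 - (Q m) ^ 2 + 1),
    (u1 m) ^ 2 * (Q m - 1) ^ 2 * (Q m + 1) ^ 2 * ((Q m) ^ 2 - Q m + 1) * ((Q m) ^ 4 - (Q m) ^ 2 + 1),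
    w1 m * (Q m - 1) ^ 2 * (Q m + 1) ^ 2 * ((Q m) ^ 2 + 1) ^ 2 * ((Q m) ^ 2 - Q m + 1),
    (Q m) ^ 2 * u1 m * (Q m - 1) * (Q m + 1) ^ 2 * ((Q m) ^ 2 - Q m + 1) * ((Q m) ^ 4 - (Q m) ^ 2 + 1),
    u1 m * (Q m - 1) * (Q m + 1) ^ 2 * ((Q m) ^ 2 + 1) * ((Q m) ^ 2 - Q m + 1) * ((Q m) ^ 4 - (Q m) ^ 2 + 1),
    (Q m - 1) ^ 2 * ((Q m) ^ 2 + 1) ^ 2 * ((Q m) ^ 2 - Q m + 1) * ((Q m) ^ 4 - (Q m) ^ 2 + 1),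
    Q m * (Q m - 1) * ((Q m) ^ 2 + 1) ^ 2 * ((Q m) ^ 2 - Q m + 1) * ((Q m) ^ 4 - (Q m) ^ 2 + 1),
    (Q m - 1) ^ 2 * (Q m + 1) ^ 2 * ((Q m) ^ 2 + 1) * ((Q m) ^ 2 - Q m + 1) * ((Q m) ^ 4 - (Q m) ^ 2 + 1),
    (Q m) ^ 3 * (Q m - 1) * ((Q m) ^ 2 + 1) ^ 2 * ((Q m) ^ 4 - (Q m) ^ 2 + 1),
    (Q m - 1) * (Q m + 1) * ((Q m) ^ 2 + 1) ^ 2 * ((Q m) ^ 2 - Q m + 1) * ((Q m) ^ 4 - (Q m) ^ 2 + 1),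
    (Q m - 1) ^ 2 * (Q m + 1) ^ 2 * ((Q m) ^ 2 + 1) ^ 2 * ((Q m) ^ 4 - (Q m) ^ 2 + 1),
    (Q m) ^ 12,
    Q m * (Q m + 1) * ((Q m) ^ 2 + 1) ^ 2 * ((Q m) ^ 2 - Q m + 1) * ((Q m) ^ 4 - (Q m) ^ 2 + 1),
    (Q m) ^ 2 * (Q m + 1) ^ 2 * ((Q m) ^ 2 + 1) * ((Q m) ^ 2 - Q m + 1) * ((Q m) ^ 4 - (Q m) ^ 2 + 1),
    (Q m + 1) ^ 2 * ((Q m) ^ 2 + 1) ^ 2 * ((Q m) ^ 2 - Q m + 1) * ((Q m) ^ 4 - (Q m) ^ 2 + 1),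
    w2 m * (Q m - 1) ^ 2 * (Q m + 1) ^ 2 * ((Q m) ^ 2 + 1) ^ 2 * ((Q m) ^ 2 - Q m + 1),
    (Q m) ^ 2 * u2 m * (Q m - 1) * (Q m + 1) ^ 2 * ((Q m) ^ 2 - Q m + 1) * ((Q m) ^ 4 - (Q m) ^ 2 + 1),
    u2 m * (Q m - 1) * (Q m + 1) ^ 2 * ((Q m) ^ 2 + 1) * ((Q m) ^ 2 - Q m + 1) * ((Q m) ^ 4 - (Q m) ^ 2 + 1),
    (u2 m) ^ 2 * (Q m - 1) ^ 2 * (Q m + 1) ^ 2 * ((Q m) ^ 2 - Q m + 1) * ((Q m) ^ 4 - (Q m) ^ 2 + 1) }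

lemma s_sq (m : ℕ) : s m * s m = 2 * Q m := by
  unfold s Q; rw [← pow_add, ← pow_succ']; ring_nf

lemma s_le_Q (m : ℕ) : s m ≤ Q m :=
  Nat.pow_le_pow_right (by norm_num) (by omega)

lemma sQ_le (m : ℕ) : s m * (Q m + 1) ≤ (Q m) ^ 2 + Q m + 1 := by
  have h := s_le_Q m
  calc s m * (Q m + 1) ≤ Q m * (Q m + 1) := Nat.mul_le_mul_right _ h
    _ ≤ (Q m) ^ 2 + Q m + 1 := by nlinarith

lemma two_dvd_Q (m : ℕ) : 2 ∣ Q m := dvd_pow_self 2 (by omega)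

lemma two_dvd_s (m : ℕ) : 2 ∣ s m := dvd_pow_self 2 (by omega)

lemma four_dvd_Q2 (m : ℕ) : 4 ∣ (Q m) ^ 2 := by
  obtain ⟨k, hk⟩ := two_dvd_Q m
  exact ⟨k ^ 2, by rw [hk]; ring⟩

lemma Q_mod3 (m : ℕ) : Q m % 3 = 2 := by
  have h : Q m = 2 * 4 ^ m := by
    unfold Q; rw [show (4:ℕ) = 2^2 by norm_num, ← pow_mul]; ring
  rw [h, Nat.mul_mod, Nat.pow_mod]; norm_num

lemma three_dvd_A (m : ℕ) : 3 ∣ (Q m) ^ 2 - Q m + 1 := by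
  have h1 := Q_mod3 m
  have h2 : (Q m) ^ 2 % 3 = 1 := by rw [pow_two, Nat.mul_mod, h1]
  have h3 : Q m ≤ (Q m) ^ 2 := Nat.le_self_pow (by norm_num) _
  omega

lemma three_dvd_B (m : ℕ) : 3 ∣ Q m + 1 := by have := Q_mod3 m; omega

lemma w_mul (m : ℕ) : w1 m * w2 m = (Q m) ^ 4 - (Q m) ^ 2 + 1 := by
  have hle := sQ_le m
  have hle2 : (Q m) ^ 2 ≤ (Q m) ^ 4 :=
    Nat.pow_le_pow_right (by unfold Q; positivity) (by norm_num)
  have ht : ((s m : ℤ)) ^ 2 = 2 * (Q m : ℤ) := by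
    have h := s_sq m
    have h' : ((s m : ℤ)) * s m = 2 * (Q m : ℤ) := by exact_mod_cast h
    linear_combination h'
  unfold w1 w2
  zify [hle, hle2]
  linear_combination (-((Q m : ℤ) + 1) ^ 2) * ht

lemma w1_odd (m : ℕ) : Odd (w1 m) := by
  have hle := sQ_le m
  obtain ⟨k, hk⟩ := two_dvd_s m
  obtain ⟨j, hj⟩ := two_dvd_Q m
  have h1 : (Q m) ^ 2 + Q m + 1 = 2 * (2*j*j + j) + 1 := by rw [hj]; ring
  have h2 : s m * (Q m + 1) = 2 * (k * (Q m + 1)) := by rw [hk]; ring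
  have hle' : 2 * (k * (Q m + 1)) ≤ 2 * (2*j*j + j) + 1 := by rw [← h1, ← h2]; omega
  unfold w1
  rw [h1, h2, Nat.odd_iff]
  omega

lemma w2_odd (m : ℕ) : Odd (w2 m) := by
  obtain ⟨k, hk⟩ := two_dvd_s m
  obtain ⟨j, hj⟩ := two_dvd_Q m
  have h1 : (Q m) ^ 2 + Q m + 1 = 2 * (2*j*j + j) + 1 := by rw [hj]; ring
  have h2 : s m * (Q m + 1) = 2 * (k * (Q m + 1)) := by rw [hk]; ring
  unfold w2
  rw [h1, h2, Nat.odd_iff]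
  omega

lemma not_dvd_twelve {l : ℕ} (hl : l.Prime) (h2 : l ≠ 2) (h3 : l ≠ 3) : ¬ l ∣ 12 := by
  intro h
  have h12 := Nat.le_of_dvd (by norm_num) h
  have := hl.two_le
  interval_cases l
  all_goals first
    | exact h2 rfl
    | exact h3 rfl
    | exact absurd hl (by decide)
    | exact absurd h (by decide)

lemma auxdvd {l M d : ℕ} (hl : l.Prime) (hlM : l ∣ M) (hdM : d ∣ M)
    (hd : 0 < d) (hld : ¬ l ∣ d) : l ∣ M / d := by
  obtain ⟨k, hk⟩ := hdM
  subst hk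
  rw [Nat.mul_div_cancel_left _ hd]
  rcases (hl.dvd_mul.mp hlM) with h | h
  · exact absurd h hld
  · exact h


end Ree2F4

open Ree2F4 in
/-- Lemma 8(i): if `a ∈ cd(²F₄(q²))`, `a ∉ {1, q²⁴}` and `a` is coprime to `ℓ₁ℓ₂`,
where `ℓ₁, ℓ₂ ≠ 3` are primes dividing `w₁`, `w₂` respectively, then `a` is one of three
explicit degrees. -/
theorem stmt_2 (m : ℕ) (hm : 1 ≤ m) (l1 l2 : ℕ)
    (hl1 : Nat.Prime l1) (hl2 : Nat.Prime l2) (hl1ne : l1 ≠ 3) (hl2ne : l2 ≠ 3)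
    (hl1div : l1 ∣ w1 m) (hl2div : l2 ∣ w2 m)
    (a : ℕ) (ha : a ∈ D m) (hne : a ∉ ({1, (Q m) ^ 12} : Set ℕ))
    (hcop : Nat.gcd (l1 * l2) a = 1) :
    a = s m / 2 * (Q m - 1) * (Q m + 1) ^ 2 * ((Q m) ^ 2 - Q m + 1) ∨
    a = (Q m) ^ 2 * (Q m - 1) ^ 2 * (Q m + 1) ^ 2 * ((Q m) ^ 2 + 1) ^ 2 / 3 ∨
    a = s m / 2 * (Q m) ^ 6 * (Q m - 1) * (Q m + 1) ^ 2 * ((Q m) ^ 2 - Q m + 1) := by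
  have hco1 : Nat.Coprime l1 a := Nat.Coprime.coprime_dvd_left (dvd_mul_right l1 l2) hcop
  have hco2 : Nat.Coprime l2 a := Nat.Coprime.coprime_dvd_left (dvd_mul_left l2 l1) hcop
  have h1 : ¬ l1 ∣ a := (Nat.Prime.coprime_iff_not_dvd hl1).mp hco1
  have h2 : ¬ l2 ∣ a := (Nat.Prime.coprime_iff_not_dvd hl2).mp hco2
  have hW1 : l1 ∣ (Q m) ^ 4 - (Q m) ^ 2 + 1 := (w_mul m) ▸ Dvd.dvd.mul_right hl1div (w2 m)
  have hl12 : l1 ≠ 2 := by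
    rintro rfl
    have := Nat.odd_iff.mp (w1_odd m)
    omega
  have hl22 : l2 ≠ 2 := by
    rintro rfl
    have := Nat.odd_iff.mp (w2_odd m)
    omega
  have hnl1 : ¬ l1 ∣ 12 := not_dvd_twelve hl1 hl12 hl1ne
  have hnl2 : ¬ l2 ∣ 12 := not_dvd_twelve hl2 hl22 hl2ne
  have h4 := four_dvd_Q2 m
  have h3A := three_dvd_A m
  have h3B := three_dvd_B m
  have h2Q2 : 2 ∣ (Q m) ^ 2 := dvd_trans (by norm_num : (2:ℕ) ∣ 4) h4
  simp only [Set.mem_insert_iff, Set.mem_singleton_iff, not_or] at hne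
  simp only [D, Set.mem_insert_iff, Set.mem_singleton_iff] at ha
  rcases ha with rfl|rfl|rfl|rfl|rfl|rfl|rfl|rfl|rfl|rfl|rfl|rfl|rfl|rfl|rfl|rfl|rfl|rfl|rfl|rfl|rfl|rfl|rfl|rfl|rfl|rfl|rfl|rfl|rfl|rfl|rfl|rfl|rfl|rfl|rfl|rfl|rfl|rfl|rfl|rfl|rfl|rfl|rfl
  · exact absurd rfl hne.1
  · exact Or.inl rfl
  · exact absurd (hW1.mul_left _) h1
  · exact absurd (hW1.mul_left _) h1
  · refine absurd (auxdvd hl1 ?_ ?_ (by norm_num) hnl1) h1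
    · exact ((hl1div.mul_left _).mul_right _).mul_right _
    · exact Nat.Coprime.mul_dvd_of_dvd_of_dvd (by norm_num)
        ((((h4.mul_right _).mul_right _).mul_right _).mul_right _) (h3A.mul_left _)
  · refine absurd (auxdvd hl2 ?_ ?_ (by norm_num) hnl2) h2
    · exact ((hl2div.mul_left _).mul_right _).mul_right _
    · exact Nat.Coprime.mul_dvd_of_dvd_of_dvd (by norm_num)
        ((((h4.mul_right _).mul_right _).mul_right _).mul_right _) (h3A.mul_left _)
  · refine absurd (auxdvd hl1 (hW1.mul_left _) ?_ (by norm_num)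
      (fun h => hnl1 (h.trans ⟨2, rfl⟩))) h1
    exact Nat.Coprime.mul_dvd_of_dvd_of_dvd (by norm_num)
      (((h2Q2.mul_right _).mul_right _).mul_right _)
      (((dvd_pow h3B two_ne_zero).mul_left _).mul_right _)
  · exact absurd (auxdvd hl1
      ((((hl1div.mul_left _).mul_right _).mul_right _).mul_right _)
      ((((h4.mul_right _).mul_right _).mul_right _).mul_right _)
      (by norm_num) (fun h => hnl1 (h.trans ⟨3, rfl⟩))) h1
  · exact absurd (auxdvd hl2
      (((hl2div.mul_left _).mul_right _).mul_right _)
      ((((h4.mul_right _).mul_right _).mul_right _).mul_right _)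
      (by norm_num) (fun h => hnl2 (h.trans ⟨3, rfl⟩))) h2
  · exact absurd (auxdvd hl2
      ((((hl2div.mul_left _).mul_right _).mul_right _).mul_right _)
      ((((h4.mul_right _).mul_right _).mul_right _).mul_right _)
      (by norm_num) (fun h => hnl2 (h.trans ⟨3, rfl⟩))) h2
  · exact absurd (auxdvd hl1
      (((hl1div.mul_left _).mul_right _).mul_right _)
      ((((h4.mul_right _).mul_right _).mul_right _).mul_right _)
      (by norm_num) (fun h => hnl1 (h.trans ⟨3, rfl⟩))) h1
  · exact absurd (auxdvd hl1 (hW1.mul_left _)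
      ((h3A.mul_left _).mul_right _)
      (by norm_num) (fun h => hnl1 (h.trans ⟨4, rfl⟩))) h1
  · exact Or.inr (Or.inl rfl)
  · exact absurd (auxdvd hl1 (hW1.mul_left _)
      ((h2Q2.mul_right _).mul_right _)
      (by norm_num) (fun h => hnl1 (h.trans ⟨6, rfl⟩))) h1
  · exact absurd (hW1.mul_left _) h1
  · exact absurd (hW1.mul_left _) h1
  · exact absurd (hW1.mul_left _) h1
  · exact absurd (hW1.mul_left _) h1
  · exact absurd (hW1.mul_left _) h1
  · exact absurd (hW1.mul_left _) h1
  · exact absurd (hW1.mul_left _) h1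
  · exact absurd (hW1.mul_left _) h1
  · exact Or.inr (Or.inr rfl)
  · exact absurd (hW1.mul_left _) h1
  · exact absurd (hW1.mul_left _) h1
  · exact absurd (hW1.mul_left _) h1
  · exact absurd ((((hl1div.mul_right _).mul_right _).mul_right _).mul_right _) h1
  · exact absurd (hW1.mul_left _) h1
  · exact absurd (hW1.mul_left _) h1
  · exact absurd (hW1.mul_left _) h1
  · exact absurd (hW1.mul_left _) h1
  · exact absurd (hW1.mul_left _) h1
  · exact absurd (hW1.mul_left _) h1
  · exact absurd (hW1.mul_left _) h1
  · exact absurd (hW1.mul_left _) h1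
  · exact absurd rfl hne.2
  · exact absurd (hW1.mul_left _) h1
  · exact absurd (hW1.mul_left _) h1
  · exact absurd (hW1.mul_left _) h1
  · exact absurd ((((hl2div.mul_right _).mul_right _).mul_right _).mul_right _) h2
  · exact absurd (hW1.mul_left _) h1
  · exact absurd (hW1.mul_left _) h1
  · exact absurd (hW1.mul_left _) h1
end

section
/- Set x = Q^2(Q-1)^2(Q+1)^2(Q^2+1)^2/3. Then x is an isolated element of D, meaning: (1) for every d ∈ D, if d divides x then d ∈ {1, x}; and (2) for every d ∈ D, if x divides d then d = x. -/
lemma nd {g A B : ℕ} (hg : 2 ≤ g) (h1 : g ∣ A) (h2 : Nat.Coprime g B) : ¬ A ∣ B := by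
  intro h
  have := h2.eq_one_of_dvd (h1.trans h)
  omega

lemma nd2 {g A R : ℕ} (hg : 2 ≤ g) (hA : g * g ∣ A) (hcop : Nat.Coprime g R) : ¬ A ∣ g * R := by
  intro h
  obtain ⟨w, hw⟩ := hA.trans h
  rw [mul_assoc] at hw
  have hR : R = g * w := Nat.eq_of_mul_eq_mul_left (by omega) hw
  have hgR : g ∣ R := ⟨w, hR⟩
  have := hcop.eq_one_of_dvd hgR
  omega

lemma dvd_div_of {g N c0 : ℕ} (h : c0 ∣ N) (hg : g ∣ N) (hc : Nat.Coprime g c0) : g ∣ N / c0 :=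
  hc.dvd_of_dvd_mul_right (by rwa [Nat.div_mul_cancel h])

lemma div_dvd_self' {N c0 : ℕ} (h : c0 ∣ N) : N / c0 ∣ N :=
  ⟨c0, (Nat.div_mul_cancel h).symm⟩

lemma cop2 {v : ℕ} (h : v % 2 = 1) : Nat.Coprime 2 v :=
  (Nat.prime_two.coprime_iff_not_dvd).mpr (by omega)

lemma cop3 {v : ℕ} (h : v % 3 ≠ 0) : Nat.Coprime 3 v :=
  (Nat.prime_three.coprime_iff_not_dvd).mpr (by omega)

lemma copsucc (M : ℕ) : Nat.Coprime (M + 1) M := by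
  rw [add_comm]; exact (Nat.coprime_add_self_left).mpr (Nat.coprime_one_left M)

lemma pow2mod9 (t : ℕ) : 2 ^ t % 9 = 2 ^ (t % 6) % 9 := by
  conv_lhs => rw [← Nat.div_add_mod t 6]
  rw [pow_add, Nat.mul_mod, pow_mul, Nat.pow_mod]
  norm_num

set_option linter.unusedVariables false in
set_option maxHeartbeats 1000000 in
open Ree2F4 in
private lemma main_cases (m : ℕ) (hm : 1 ≤ m) (n : ℕ) (hn : Q m = n) (hpow : n = 2 ^ (2 * m + 1)) (hspow : s m = 2 ^ (m + 1))
  (hn8 : 8 ≤ n) (h2n : 2 ∣ n) (h2s : 2 ∣ s m) (hsn : 2 * s m ≤ n) (hss : s m * s m = 2 * n)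
  (hz : n ^ 2 = 4 * 2 ^ (4 * m)) (hs2 : s m / 2 = 2 ^ m) (hle1 : n ≤ n ^ 2) (hle2 : n ^ 2 ≤ n ^ 4) (hn2sq : 64 ≤ n ^ 2)
  (h2n2 : 2 ∣ n ^ 2) (h2n4 : 2 ∣ n ^ 4) (hle2' : 2 * n ^ 2 ≤ n ^ 4) (hle1' : 2 * n ≤ n ^ 2) (hn4m : n = 2 * 4 ^ m)
  (h4m3 : 4 ^ m % 3 = 1) (hn3 : n % 3 = 2) (hsq3 : n ^ 2 % 3 = 1) (hq3 : n ^ 4 % 3 = 1)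
  (h9 : n % 9 = 2 ∨ n % 9 = 5 ∨ n % 9 = 8) (hsq9 : n ^ 2 % 9 = n % 9 * (n % 9) % 9) (a : ℕ) (ha : n - 1 = a) (c : ℕ)
  (hc : n ^ 2 + 1 = c) (e : ℕ) (he : n ^ 2 - n + 1 = e) (f : ℕ) (hf : n ^ 4 - n ^ 2 + 1 = f) (p : ℕ) (hp : u1 m = p)
  (q : ℕ) (hq : u2 m = q) (r1 : ℕ) (hr1 : w1 m = r1) (r2 : ℕ) (hr2 : w2 m = r2) (han : a + 1 = n) (hce : c = e + n)
  (hfc : f + n ^ 2 = n ^ 4 + 1) (hpe : p + s m = n + 1) (hqe : q = n + s m + 1) (hsb : s m * (n + 1) ≤ n ^ 2 + n)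
  (hsb2 : 2 * (s m * (n + 1)) ≤ n ^ 2 + n) (h2sb : 2 ∣ s m * (n + 1)) (hw1n : w1 m = n ^ 2 + n + 1 - s m * (n + 1))
  (hr1e : r1 + s m * (n + 1) = n ^ 2 + n + 1) (hr2e : r2 = n ^ 2 + n + 1 + s m * (n + 1)) (k : ℕ) (hk : n + 1 = 3 * k)
  (j : ℕ) (hj : e = 3 * j) (h9e : e % 9 = 3) (hj3 : j % 3 ≠ 0) (hp2 : 2 ≤ p) (hq2 : 2 ≤ q) (hr12 : 2 ≤ r1)
  (hr22 : 2 ≤ r2) (hf2 : 2 ≤ f) (hj2 : 2 ≤ j) (ha2 : 2 ≤ a) (hc2 : 2 ≤ c) (hk1 : 1 ≤ k) (hao : a % 2 = 1)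
  (hbo : (n + 1) % 2 = 1) (hco : c % 2 = 1) (heo : e % 2 = 1) (hfo : f % 2 = 1) (hpo : p % 2 = 1) (hqo : q % 2 = 1)
  (hr1o : r1 % 2 = 1) (hr2o : r2 % 2 = 1) (ha3 : a % 3 = 1) (hc3 : c % 3 = 2) (hf3 : f % 3 = 1)
  (hna : n * a + n = n ^ 2) (hena : e = n * a + 1) (hfab : n * (n * a * (n + 1)) + n ^ 2 = n ^ 4)
  (hfnab : f = n * (n * a * (n + 1)) + 1) (hcaux : a * (n + 1) + 1 = n ^ 2) (hcab : c = 2 + a * (n + 1))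
  (hcbb : c = 2 + (n + 1) * a) (t : ℕ) (ht : n = t + 2) (hebt0 : (n + 1) * t + 3 + n = n ^ 2 + 1)
  (heb : e = 3 + (n + 1) * t) (t2 : ℕ) (ht2 : n ^ 2 = t2 + 2) (hcft0 : c * t2 + 3 + n ^ 2 = n ^ 4 + 1)
  (hcf : f = 3 + c * t2) (hq' : q = p + 2 * s m) (hpq0 : p * q + s m * s m = (n + 1) * (n + 1)) (hpq : p * q = c)
  (hr2' : r2 = r1 + 2 * (s m * (n + 1)))
  (hw0 : r1 * r2 + s m * (n + 1) * (s m * (n + 1)) = (n ^ 2 + n + 1) * (n ^ 2 + n + 1))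
  (hw1s : s m * (n + 1) * (s m * (n + 1)) = 2 * n ^ 3 + 4 * n ^ 2 + 2 * n)
  (hw2s : (n ^ 2 + n + 1) * (n ^ 2 + n + 1) = n ^ 4 + 2 * n ^ 3 + 3 * n ^ 2 + 2 * n + 1) (hw : r1 * r2 = f)
  (cEna : e.Coprime (n * a)) (cEn : e.Coprime n) (cEa : e.Coprime a) (cFbig : f.Coprime (n * (n * a * (n + 1))))
  (cFn : f.Coprime n) (cFa : f.Coprime a) (cFb : f.Coprime (n + 1)) (cCn : c.Coprime n) (cCa : c.Coprime a)
  (cCb : c.Coprime (n + 1)) (cCe : c.Coprime e) (cFc : f.Coprime c) (cF3 : f.Coprime 3) (cC3 : c.Coprime 3)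
  (cA3 : a.Coprime 3) (hkd : k ∣ n + 1) (hjd : j ∣ e) (hgbe : (n + 1).gcd e = 3) (cJK : j.Coprime k) (cJ3 : j.Coprime 3)
  (cJn : j.Coprime n) (cJa : j.Coprime a) (cJc : j.Coprime c) (hpc : p ∣ c) (hqc : q ∣ c) (cPQ : p.Coprime q)
  (cCk : c.Coprime k) (cFk : f.Coprime k) (X : ℕ) (hXd : 3 * (n ^ 2 * a ^ 2 * k ^ 2 * c ^ 2) = X)
  (hXnum : n ^ 2 * a ^ 2 * (n + 1) ^ 2 * c ^ 2 = 3 * X) (hX : n ^ 2 * a ^ 2 * (n + 1) ^ 2 * c ^ 2 / 3 = X)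
  (hP1 : 0 < n ^ 2 * a ^ 2 * k ^ 2 * c ^ 2) (hXpos : 0 < X) (hX3 : 3 ≤ X)
  (copX : ∀ (g : ℕ), g.Coprime 3 → g.Coprime n → g.Coprime a → g.Coprime k → g.Coprime c → g.Coprime X)
  (cFX : f.Coprime X) (hr1f : r1 ∣ f) (hr2f : r2 ∣ f) (cR1X : r1.Coprime X) (cR2X : r2.Coprime X) (cJX : j.Coprime X)
  (dAX : a ∣ X) (dBX : n + 1 ∣ X) (dCX : c ∣ X) (dNX : n ∣ X) (dPX : p ∣ X) (dQX : q ∣ X) (dCCX : c * c ∣ X)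
  (dNNX : n * n ∣ X) (dPPX : p * p ∣ X) (dQQX : q * q ∣ X) (cAn : a.Coprime n) (cAB : a.Coprime (n + 1))
  (cAc : a.Coprime c) (cAe : a.Coprime e) (cAf : a.Coprime f) (cBn : (n + 1).Coprime n) (cBa : (n + 1).Coprime a)
  (cBc : (n + 1).Coprime c) (cBf : (n + 1).Coprime f) (cCf : c.Coprime f) (cQn : q.Coprime n) (cQa : q.Coprime a)
  (cQb : q.Coprime (n + 1)) (cQe : q.Coprime e) (cQf : q.Coprime f) (cQr1 : q.Coprime r1) (cQr2 : q.Coprime r2)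
  (cQp : q.Coprime p) (cPn : p.Coprime n) (cPa : p.Coprime a) (cPb : p.Coprime (n + 1)) (cPe : p.Coprime e)
  (cPf : p.Coprime f) (cPr1 : p.Coprime r1) (cPr2 : p.Coprime r2) (cCr1 : c.Coprime r1) (cCr2 : c.Coprime r2)
  (cC2m : c.Coprime (2 ^ m)) (cQ2m : q.Coprime (2 ^ m)) (cP2m : p.Coprime (2 ^ m))
  (copNodd : ∀ (B : ℕ), Nat.Coprime 2 B → n.Coprime B) (d : ℕ)
  (hd :
    d = 1 ∨
      d = 2 ^ m * a * (n + 1) ^ 2 * e ∨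
        d = n * e * f ∨
          d = a * c ^ 2 * f ∨
            d = n ^ 2 * p ^ 2 * r1 * a ^ 2 * e / 12 ∨
              d = n ^ 2 * q ^ 2 * r2 * a ^ 2 * e / 12 ∨
                d = n ^ 2 * a ^ 2 * (n + 1) ^ 2 * f / 6 ∨
                  d = n ^ 2 * r1 * a ^ 2 * (n + 1) ^ 2 * e / 4 ∨
                    d = n ^ 2 * p ^ 2 * r2 * (n + 1) ^ 2 * e / 4 ∨
                      d = n ^ 2 * r2 * a ^ 2 * (n + 1) ^ 2 * e / 4 ∨
                        d = n ^ 2 * q ^ 2 * r1 * (n + 1) ^ 2 * e / 4 ∨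
                          d = n ^ 2 * a ^ 2 * e * f / 3 ∨
                            d = X ∨
                              d = n ^ 2 * c ^ 2 * f / 2 ∨
                                d = p * a * (n + 1) ^ 2 * e * f ∨
                                  d = (n + 1) ^ 2 * c * e * f ∨
                                    d = q * a * (n + 1) ^ 2 * e * f ∨
                                      d = n * a ^ 2 * c ^ 2 * f ∨
                                        d = a * c ^ 2 * e * f ∨
                                          d = n ^ 5 * e * f ∨
                                            d = (n + 1) * c ^ 2 * e * f ∨
                                              d = 2 ^ m * p * a ^ 2 * (n + 1) ^ 2 * e * f ∨
                                                d = 2 ^ m * n ^ 6 * a * (n + 1) ^ 2 * e ∨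
                                                  d = 2 ^ m * a * (n + 1) ^ 2 * c * e * f ∨
                                                    d = 2 ^ m * q * a ^ 2 * (n + 1) ^ 2 * e * f ∨
                                                      d = p ^ 2 * a ^ 2 * (n + 1) ^ 2 * e * f ∨
                                                        d = r1 * a ^ 2 * (n + 1) ^ 2 * c ^ 2 * e ∨
                                                          d = n ^ 2 * p * a * (n + 1) ^ 2 * e * f ∨
                                                            d = p * a * (n + 1) ^ 2 * c * e * f ∨
                                                              d = a ^ 2 * c ^ 2 * e * f ∨
                                                                d = n * a * c ^ 2 * e * f ∨
                                                                  d = a ^ 2 * (n + 1) ^ 2 * c * e * f ∨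
                                                                    d = n ^ 3 * a * c ^ 2 * f ∨
                                                                      d = a * (n + 1) * c ^ 2 * e * f ∨
                                                                        d = a ^ 2 * (n + 1) ^ 2 * c ^ 2 * f ∨
                                                                          d = n ^ 12 ∨
                                                                            d = n * (n + 1) * c ^ 2 * e * f ∨
                                                                              d = n ^ 2 * (n + 1) ^ 2 * c * e * f ∨
                                                                                d = (n + 1) ^ 2 * c ^ 2 * e * f ∨
                                                                                  d =
                                                                                      r2 * a ^ 2 * (n + 1) ^ 2 * c ^ 2 *
                                                                                        e ∨
                                                                                    d =
                                                                                        n ^ 2 * q * a * (n + 1) ^ 2 *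
                                                                                            e *
                                                                                          f ∨
                                                                                      d =
                                                                                          q * a * (n + 1) ^ 2 * c * e *
                                                                                            f ∨
                                                                                        d =
                                                                                          q ^ 2 * a ^ 2 * (n + 1) ^ 2 *
                                                                                              e *
                                                                                            f) :
    (d ∣ X → d = 1 ∨ d = X) ∧ (X ∣ d → d = X) := by
  have hb2 : 2 ≤ n + 1 := by omega
  have hn2' : 2 ≤ n := by omega
  have c12eq : (2:ℕ) * (2 * 3) = 12 := by norm_num
  have c6eq : (2:ℕ) * 3 = 6 := by norm_num
  have c4eq : (2:ℕ) * 2 = 4 := by norm_num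
  have cF2 : Nat.Coprime f 2 := (cop2 hfo).symm
  have cR1_2 : Nat.Coprime r1 2 := (cop2 hr1o).symm
  have cR2_2 : Nat.Coprime r2 2 := (cop2 hr2o).symm
  have cR1_3 : Nat.Coprime r1 3 := cF3.coprime_dvd_left hr1f
  have cR2_3 : Nat.Coprime r2 3 := cF3.coprime_dvd_left hr2f
  have cR1_12 : Nat.Coprime r1 12 := c12eq ▸ cR1_2.mul_right (cR1_2.mul_right cR1_3)
  have cR2_12 : Nat.Coprime r2 12 := c12eq ▸ cR2_2.mul_right (cR2_2.mul_right cR2_3)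
  have cR1_4 : Nat.Coprime r1 4 := c4eq ▸ cR1_2.mul_right cR1_2
  have cR2_4 : Nat.Coprime r2 4 := c4eq ▸ cR2_2.mul_right cR2_2
  have cF6 : Nat.Coprime f 6 := c6eq ▸ cF2.mul_right cF3
  rcases hd with rfl | rfl | rfl | rfl | rfl | rfl | rfl | rfl | rfl | rfl | rfl | rfl | rfl | rfl | rfl | rfl | rfl | rfl | rfl | rfl | rfl | rfl | rfl | rfl | rfl | rfl | rfl | rfl | rfl | rfl | rfl | rfl | rfl | rfl | rfl | rfl | rfl | rfl | rfl | rfl | rfl | rfl | rfl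
  · exact ⟨fun _ => Or.inl rfl, fun h2 => absurd (Nat.le_of_dvd one_pos h2) (by omega)⟩
  · exact ⟨fun h1 => absurd h1 (nd hj2 ⟨2^m*a*(n+1)^2*3, by rw [hj]; ring⟩ cJX),
      fun h2 => absurd h2 (nd hc2 dCX (((cC2m.mul_right cCa).mul_right (cCb.pow_right 2)).mul_right cCe))⟩
  · exact ⟨fun h1 => absurd h1 (nd hf2 ⟨n*e, by ring⟩ cFX),
      fun h2 => absurd h2 (nd ha2 dAX ((cAn.mul_right cAe).mul_right cAf))⟩
  · exact ⟨fun h1 => absurd h1 (nd hf2 ⟨a*c^2, by ring⟩ cFX),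
      fun h2 => absurd h2 (nd hb2 dBX ((cBa.mul_right (cBc.pow_right 2)).mul_right cBf))⟩
  · have hN : (12:ℕ) ∣ n^2*p^2*r1*a^2*e := ⟨2^(4*m)*p^2*r1*a^2*j, by rw [hz, hj]; ring⟩
    exact ⟨fun h1 => absurd h1 (nd hr12 (dvd_div_of hN ⟨n^2*p^2*(a^2*e), by ring⟩ cR1_12) cR1X),
      fun h2 => absurd h2 (nd hq2 dQX (Nat.Coprime.coprime_dvd_right (div_dvd_self' hN)
        (((((cQn.pow_right 2).mul_right (cQp.pow_right 2)).mul_right cQr1).mul_right (cQa.pow_right 2)).mul_right cQe)))⟩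
  · have hN : (12:ℕ) ∣ n^2*q^2*r2*a^2*e := ⟨2^(4*m)*q^2*r2*a^2*j, by rw [hz, hj]; ring⟩
    exact ⟨fun h1 => absurd h1 (nd hr22 (dvd_div_of hN ⟨n^2*q^2*(a^2*e), by ring⟩ cR2_12) cR2X),
      fun h2 => absurd h2 (nd hp2 dPX (Nat.Coprime.coprime_dvd_right (div_dvd_self' hN)
        (((((cPn.pow_right 2).mul_right (cPQ.pow_right 2)).mul_right cPr2).mul_right (cPa.pow_right 2)).mul_right cPe)))⟩
  · have hN : (6:ℕ) ∣ n^2*a^2*(n+1)^2*f := ⟨2*2^(4*m)*a^2*((n+1)*k)*f, by rw [hz, hk]; ring⟩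
    exact ⟨fun h1 => absurd h1 (nd hf2 (dvd_div_of hN ⟨n^2*a^2*(n+1)^2, by ring⟩ cF6) cFX),
      fun h2 => absurd h2 (nd hc2 dCX (Nat.Coprime.coprime_dvd_right (div_dvd_self' hN)
        ((((cCn.pow_right 2).mul_right (cCa.pow_right 2)).mul_right (cCb.pow_right 2)).mul_right cCf)))⟩
  · have hN : (4:ℕ) ∣ n^2*r1*a^2*(n+1)^2*e := ⟨2^(4*m)*r1*a^2*(n+1)^2*e, by rw [hz]; ring⟩
    exact ⟨fun h1 => absurd h1 (nd hr12 (dvd_div_of hN ⟨n^2*(a^2*(n+1)^2*e), by ring⟩ cR1_4) cR1X),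
      fun h2 => absurd h2 (nd hc2 dCX (Nat.Coprime.coprime_dvd_right (div_dvd_self' hN)
        (((((cCn.pow_right 2).mul_right cCr1).mul_right (cCa.pow_right 2)).mul_right (cCb.pow_right 2)).mul_right cCe)))⟩
  · have hN : (4:ℕ) ∣ n^2*p^2*r2*(n+1)^2*e := ⟨2^(4*m)*p^2*r2*(n+1)^2*e, by rw [hz]; ring⟩
    exact ⟨fun h1 => absurd h1 (nd hr22 (dvd_div_of hN ⟨n^2*p^2*((n+1)^2*e), by ring⟩ cR2_4) cR2X),
      fun h2 => absurd h2 (nd hq2 dQX (Nat.Coprime.coprime_dvd_right (div_dvd_self' hN)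
        (((((cQn.pow_right 2).mul_right (cQp.pow_right 2)).mul_right cQr2).mul_right (cQb.pow_right 2)).mul_right cQe)))⟩
  · have hN : (4:ℕ) ∣ n^2*r2*a^2*(n+1)^2*e := ⟨2^(4*m)*r2*a^2*(n+1)^2*e, by rw [hz]; ring⟩
    exact ⟨fun h1 => absurd h1 (nd hr22 (dvd_div_of hN ⟨n^2*(a^2*(n+1)^2*e), by ring⟩ cR2_4) cR2X),
      fun h2 => absurd h2 (nd hc2 dCX (Nat.Coprime.coprime_dvd_right (div_dvd_self' hN)
        (((((cCn.pow_right 2).mul_right cCr2).mul_right (cCa.pow_right 2)).mul_right (cCb.pow_right 2)).mul_right cCe)))⟩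
  · have hN : (4:ℕ) ∣ n^2*q^2*r1*(n+1)^2*e := ⟨2^(4*m)*q^2*r1*(n+1)^2*e, by rw [hz]; ring⟩
    exact ⟨fun h1 => absurd h1 (nd hr12 (dvd_div_of hN ⟨n^2*q^2*((n+1)^2*e), by ring⟩ cR1_4) cR1X),
      fun h2 => absurd h2 (nd hp2 dPX (Nat.Coprime.coprime_dvd_right (div_dvd_self' hN)
        (((((cPn.pow_right 2).mul_right (cPQ.pow_right 2)).mul_right cPr1).mul_right (cPb.pow_right 2)).mul_right cPe)))⟩
  · have hN : (3:ℕ) ∣ n^2*a^2*e*f := ⟨n^2*a^2*j*f, by rw [hj]; ring⟩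
    exact ⟨fun h1 => absurd h1 (nd hf2 (dvd_div_of hN ⟨n^2*a^2*e, by ring⟩ cF3) cFX),
      fun h2 => absurd h2 (nd hc2 dCX (Nat.Coprime.coprime_dvd_right (div_dvd_self' hN)
        ((((cCn.pow_right 2).mul_right (cCa.pow_right 2)).mul_right cCe).mul_right cCf)))⟩
  · exact ⟨fun _ => Or.inr rfl, fun _ => rfl⟩
  · have hN : (2:ℕ) ∣ n^2*c^2*f := ⟨2*2^(4*m)*c^2*f, by rw [hz]; ring⟩
    exact ⟨fun h1 => absurd h1 (nd hf2 (dvd_div_of hN ⟨n^2*c^2, by ring⟩ cF2) cFX),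
      fun h2 => absurd h2 (nd ha2 dAX (Nat.Coprime.coprime_dvd_right (div_dvd_self' hN)
        (((cAn.pow_right 2).mul_right (cAc.pow_right 2)).mul_right cAf)))⟩
  · exact ⟨fun h1 => absurd h1 (nd hf2 ⟨p*a*(n+1)^2*e, by ring⟩ cFX),
      fun h2 => absurd h2 (nd hq2 dQX ((((cQp.mul_right cQa).mul_right (cQb.pow_right 2)).mul_right cQe).mul_right cQf))⟩
  · exact ⟨fun h1 => absurd h1 (nd hf2 ⟨(n+1)^2*c*e, by ring⟩ cFX),
      fun h2 => absurd h2 (nd ha2 dAX ((((cAB.pow_right 2).mul_right cAc).mul_right cAe).mul_right cAf))⟩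
  · exact ⟨fun h1 => absurd h1 (nd hf2 ⟨q*a*(n+1)^2*e, by ring⟩ cFX),
      fun h2 => absurd h2 (nd hp2 dPX ((((cPQ.mul_right cPa).mul_right (cPb.pow_right 2)).mul_right cPe).mul_right cPf))⟩
  · exact ⟨fun h1 => absurd h1 (nd hf2 ⟨n*a^2*c^2, by ring⟩ cFX),
      fun h2 => absurd h2 (nd hb2 dBX (((cBn.mul_right (cBa.pow_right 2)).mul_right (cBc.pow_right 2)).mul_right cBf))⟩
  · exact ⟨fun h1 => absurd h1 (nd hf2 ⟨a*c^2*e, by ring⟩ cFX),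
      fun h2 => absurd h2 (nd hn2' dNX (copNodd _ ((((cop2 hao).mul_right ((cop2 hco).pow_right 2)).mul_right (cop2 heo)).mul_right (cop2 hfo))))⟩
  · exact ⟨fun h1 => absurd h1 (nd hf2 ⟨n^5*e, by ring⟩ cFX),
      fun h2 => absurd h2 (nd ha2 dAX (((cAn.pow_right 5).mul_right cAe).mul_right cAf))⟩
  · exact ⟨fun h1 => absurd h1 (nd hf2 ⟨(n+1)*c^2*e, by ring⟩ cFX),
      fun h2 => absurd h2 (nd ha2 dAX (((cAB.mul_right (cAc.pow_right 2)).mul_right cAe).mul_right cAf))⟩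
  · exact ⟨fun h1 => absurd h1 (nd hf2 ⟨2^m*p*a^2*(n+1)^2*e, by ring⟩ cFX),
      fun h2 => absurd h2 (nd hq2 dQX (((((cQ2m.mul_right cQp).mul_right (cQa.pow_right 2)).mul_right (cQb.pow_right 2)).mul_right cQe).mul_right cQf))⟩
  · exact ⟨fun h1 => absurd h1 (nd hj2 ⟨2^m*n^6*a*(n+1)^2*3, by rw [hj]; ring⟩ cJX),
      fun h2 => absurd h2 (nd hc2 dCX ((((cC2m.mul_right (cCn.pow_right 6)).mul_right cCa).mul_right (cCb.pow_right 2)).mul_right cCe))⟩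
  · refine ⟨fun h1 => absurd h1 (nd hf2 ⟨2^m*a*(n+1)^2*c*e, by ring⟩ cFX), fun h2 => ?_⟩
    rw [show 2^m*a*(n+1)^2*c*e*f = c*(2^m*a*(n+1)^2*(e*f)) from by ring] at h2
    exact absurd h2 (nd2 hc2 dCCX (((cC2m.mul_right cCa).mul_right (cCb.pow_right 2)).mul_right (cCe.mul_right cCf)))
  · exact ⟨fun h1 => absurd h1 (nd hf2 ⟨2^m*q*a^2*(n+1)^2*e, by ring⟩ cFX),
      fun h2 => absurd h2 (nd hp2 dPX (((((cP2m.mul_right cPQ).mul_right (cPa.pow_right 2)).mul_right (cPb.pow_right 2)).mul_right cPe).mul_right cPf))⟩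
  · exact ⟨fun h1 => absurd h1 (nd hf2 ⟨p^2*a^2*(n+1)^2*e, by ring⟩ cFX),
      fun h2 => absurd h2 (nd hq2 dQX (((((cQp.pow_right 2).mul_right (cQa.pow_right 2)).mul_right (cQb.pow_right 2)).mul_right cQe).mul_right cQf))⟩
  · exact ⟨fun h1 => absurd h1 (nd hr12 ⟨a^2*(n+1)^2*c^2*e, by ring⟩ cR1X),
      fun h2 => absurd h2 (nd hn2' dNX (copNodd _ (((((cop2 hr1o).mul_right ((cop2 hao).pow_right 2)).mul_right ((cop2 hbo).pow_right 2)).mul_right ((cop2 hco).pow_right 2)).mul_right (cop2 heo))))⟩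
  · exact ⟨fun h1 => absurd h1 (nd hf2 ⟨n^2*p*a*(n+1)^2*e, by ring⟩ cFX),
      fun h2 => absurd h2 (nd hq2 dQX ((((((cQn.pow_right 2).mul_right cQp).mul_right cQa).mul_right (cQb.pow_right 2)).mul_right cQe).mul_right cQf))⟩
  · refine ⟨fun h1 => absurd h1 (nd hf2 ⟨p*a*(n+1)^2*c*e, by ring⟩ cFX), fun h2 => ?_⟩
    rw [show p*a*(n+1)^2*c*e*f = q*(p^2*a*(n+1)^2*(e*f)) from by rw [← hpq]; ring] at h2
    exact absurd h2 (nd2 hq2 dQQX ((((cQp.pow_right 2).mul_right cQa).mul_right (cQb.pow_right 2)).mul_right (cQe.mul_right cQf)))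
  · exact ⟨fun h1 => absurd h1 (nd hf2 ⟨a^2*c^2*e, by ring⟩ cFX),
      fun h2 => absurd h2 (nd hn2' dNX (copNodd _ (((((cop2 hao).pow_right 2).mul_right ((cop2 hco).pow_right 2)).mul_right (cop2 heo)).mul_right (cop2 hfo))))⟩
  · refine ⟨fun h1 => absurd h1 (nd hf2 ⟨n*a*c^2*e, by ring⟩ cFX), fun h2 => ?_⟩
    rw [show n*a*c^2*e*f = n*(a*c^2*(e*f)) from by ring] at h2
    exact absurd h2 (nd2 hn2' dNNX (copNodd _ (((cop2 hao).mul_right ((cop2 hco).pow_right 2)).mul_right ((cop2 heo).mul_right (cop2 hfo)))))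
  · refine ⟨fun h1 => absurd h1 (nd hf2 ⟨a^2*(n+1)^2*c*e, by ring⟩ cFX), fun h2 => ?_⟩
    rw [show a^2*(n+1)^2*c*e*f = c*(a^2*(n+1)^2*(e*f)) from by ring] at h2
    exact absurd h2 (nd2 hc2 dCCX (((cCa.pow_right 2).mul_right (cCb.pow_right 2)).mul_right (cCe.mul_right cCf)))
  · exact ⟨fun h1 => absurd h1 (nd hf2 ⟨n^3*a*c^2, by ring⟩ cFX),
      fun h2 => absurd h2 (nd hb2 dBX ((((cBn.pow_right 3).mul_right cBa).mul_right (cBc.pow_right 2)).mul_right cBf))⟩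
  · exact ⟨fun h1 => absurd h1 (nd hf2 ⟨a*(n+1)*c^2*e, by ring⟩ cFX),
      fun h2 => absurd h2 (nd hn2' dNX (copNodd _ (((((cop2 hao).mul_right (cop2 hbo)).mul_right ((cop2 hco).pow_right 2)).mul_right (cop2 heo)).mul_right (cop2 hfo))))⟩
  · exact ⟨fun h1 => absurd h1 (nd hf2 ⟨a^2*(n+1)^2*c^2, by ring⟩ cFX),
      fun h2 => absurd h2 (nd hn2' dNX (copNodd _ ((((cop2 hao).pow_right 2).mul_right ((cop2 hbo).pow_right 2)).mul_right ((cop2 hco).pow_right 2) |>.mul_right (cop2 hfo))))⟩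
  · refine ⟨fun h1 => ?_, fun h2 => absurd h2 (nd ha2 dAX (cAn.pow_right 12))⟩
    exfalso
    have hle := Nat.le_of_dvd hXpos h1
    have h0 : 0 < n^2 := by omega
    have h0' : 0 < n^2*n^2*n^2*n^2*n^2 :=
      Nat.mul_pos (Nat.mul_pos (Nat.mul_pos (Nat.mul_pos h0 h0) h0) h0) h0
    have hlt : X < n^12 := by
      calc X = 3*(n^2*a^2*k^2*c^2) := hXd.symm
      _ ≤ 3*(n^2*n^2*n^2*(2*n^2)^2) := by gcongr <;> omega
      _ = 12*(n^2*n^2*n^2*n^2*n^2) := by ring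
      _ < n^2*(n^2*n^2*n^2*n^2*n^2) := mul_lt_mul_of_pos_right (by omega) h0'
      _ = n^12 := by ring
    omega
  · exact ⟨fun h1 => absurd h1 (nd hf2 ⟨n*(n+1)*c^2*e, by ring⟩ cFX),
      fun h2 => absurd h2 (nd ha2 dAX ((((cAn.mul_right cAB).mul_right (cAc.pow_right 2)).mul_right cAe).mul_right cAf))⟩
  · exact ⟨fun h1 => absurd h1 (nd hf2 ⟨n^2*(n+1)^2*c*e, by ring⟩ cFX),
      fun h2 => absurd h2 (nd ha2 dAX (((((cAn.pow_right 2).mul_right (cAB.pow_right 2)).mul_right cAc).mul_right cAe).mul_right cAf))⟩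
  · exact ⟨fun h1 => absurd h1 (nd hf2 ⟨(n+1)^2*c^2*e, by ring⟩ cFX),
      fun h2 => absurd h2 (nd hn2' dNX (copNodd _ ((((cop2 hbo).pow_right 2).mul_right ((cop2 hco).pow_right 2)).mul_right (cop2 heo) |>.mul_right (cop2 hfo))))⟩
  · exact ⟨fun h1 => absurd h1 (nd hr22 ⟨a^2*(n+1)^2*c^2*e, by ring⟩ cR2X),
      fun h2 => absurd h2 (nd hn2' dNX (copNodd _ (((((cop2 hr2o).mul_right ((cop2 hao).pow_right 2)).mul_right ((cop2 hbo).pow_right 2)).mul_right ((cop2 hco).pow_right 2)).mul_right (cop2 heo))))⟩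
  · exact ⟨fun h1 => absurd h1 (nd hf2 ⟨n^2*q*a*(n+1)^2*e, by ring⟩ cFX),
      fun h2 => absurd h2 (nd hp2 dPX ((((((cPn.pow_right 2).mul_right cPQ).mul_right cPa).mul_right (cPb.pow_right 2)).mul_right cPe).mul_right cPf))⟩
  · refine ⟨fun h1 => absurd h1 (nd hf2 ⟨q*a*(n+1)^2*c*e, by ring⟩ cFX), fun h2 => ?_⟩
    rw [show q*a*(n+1)^2*c*e*f = p*(q^2*a*(n+1)^2*(e*f)) from by rw [← hpq]; ring] at h2
    exact absurd h2 (nd2 hp2 dPPX ((((cPQ.pow_right 2).mul_right cPa).mul_right (cPb.pow_right 2)).mul_right (cPe.mul_right cPf)))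
  · exact ⟨fun h1 => absurd h1 (nd hf2 ⟨q^2*a^2*(n+1)^2*e, by ring⟩ cFX),
      fun h2 => absurd h2 (nd hp2 dPX (((((cPQ.pow_right 2).mul_right (cPa.pow_right 2)).mul_right (cPb.pow_right 2)).mul_right cPe).mul_right cPf))⟩



set_option linter.unusedVariables false in
set_option maxHeartbeats 1000000 in
open Ree2F4 in
/-- Lemma 8(v): `x = q⁴Φ₁²Φ₂²Φ₄²Φ₈²/3` is an isolated degree of `²F₄(q²)`:
no nontrivial proper degree divides it, and no proper multiple of it is a degree. -/
theorem stmt_6 (m : ℕ) (hm : 1 ≤ m) :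
    (∀ d ∈ D m, d ∣ (Q m) ^ 2 * (Q m - 1) ^ 2 * (Q m + 1) ^ 2 * ((Q m) ^ 2 + 1) ^ 2 / 3 → d = 1 ∨ d = (Q m) ^ 2 * (Q m - 1) ^ 2 * (Q m + 1) ^ 2 * ((Q m) ^ 2 + 1) ^ 2 / 3) ∧
    (∀ d ∈ D m, (Q m) ^ 2 * (Q m - 1) ^ 2 * (Q m + 1) ^ 2 * ((Q m) ^ 2 + 1) ^ 2 / 3 ∣ d → d = (Q m) ^ 2 * (Q m - 1) ^ 2 * (Q m + 1) ^ 2 * ((Q m) ^ 2 + 1) ^ 2 / 3) := by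
  suffices H : ∀ d ∈ D m, (d ∣ Q m ^ 2 * (Q m - 1) ^ 2 * (Q m + 1) ^ 2 * ((Q m) ^ 2 + 1) ^ 2 / 3 → d = 1 ∨ d = Q m ^ 2 * (Q m - 1) ^ 2 * (Q m + 1) ^ 2 * ((Q m) ^ 2 + 1) ^ 2 / 3) ∧ (Q m ^ 2 * (Q m - 1) ^ 2 * (Q m + 1) ^ 2 * ((Q m) ^ 2 + 1) ^ 2 / 3 ∣ d → d = Q m ^ 2 * (Q m - 1) ^ 2 * (Q m + 1) ^ 2 * ((Q m) ^ 2 + 1) ^ 2 / 3) by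
    exact ⟨fun d hd h => (H d hd).1 h, fun d hd h => (H d hd).2 h⟩
  intro d hd
  obtain ⟨n, hn⟩ : ∃ x, Q m = x := ⟨_, rfl⟩
  have hpow : n = 2 ^ (2 * m + 1) := by rw [← hn]; rfl
  have hspow : s m = 2 ^ (m + 1) := rfl
  -- basic size facts
  have hn8 : 8 ≤ n := by
    rw [hpow]
    calc (8:ℕ) = 2 ^ 3 := rfl
    _ ≤ 2 ^ (2 * m + 1) := Nat.pow_le_pow_right (by norm_num) (by omega)
  have h2n : 2 ∣ n := by rw [hpow]; exact dvd_pow_self 2 (by omega)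
  have h2s : 2 ∣ s m := dvd_pow_self 2 (Nat.succ_ne_zero m)
  have hsn : 2 * s m ≤ n := by
    rw [hpow, hspow]
    calc 2 * 2 ^ (m+1) = 2 ^ (m+2) := by ring
    _ ≤ 2 ^ (2*m+1) := Nat.pow_le_pow_right (by norm_num) (by omega)
  have hss : s m * s m = 2 * n := by
    rw [hpow, hspow, ← pow_add, show m+1+(m+1) = (2*m+1)+1 from by ring, pow_succ]; ring
  have hz : n ^ 2 = 4 * 2 ^ (4 * m) := by
    rw [hpow, ← pow_mul, show (2*m+1)*2 = 4*m+2 from by ring, pow_add]; ring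
  have hs2 : s m / 2 = 2 ^ m := by
    rw [hspow, pow_succ]; exact Nat.mul_div_cancel _ two_pos
  have hle1 : n ≤ n ^ 2 := Nat.le_self_pow (by norm_num) n
  have hle2 : n ^ 2 ≤ n ^ 4 := Nat.pow_le_pow_right (by omega) (by norm_num)
  have hn2sq : 64 ≤ n ^ 2 := by calc (64:ℕ) = 8^2 := rfl
                                   _ ≤ n^2 := Nat.pow_le_pow_left hn8 2
  have h2n2 : 2 ∣ n ^ 2 := dvd_pow h2n (by norm_num)
  have h2n4 : 2 ∣ n ^ 4 := dvd_pow h2n (by norm_num)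
  have hle2' : 2 * n ^ 2 ≤ n ^ 4 := by
    have h1 : 2 * n^2 ≤ n^2 * n^2 := Nat.mul_le_mul_right _ (by omega)
    have h2 : n^2 * n^2 = n^4 := by ring
    omega
  have hle1' : 2 * n ≤ n ^ 2 := by
    have h1 : 2 * n ≤ n * n := Nat.mul_le_mul_right _ (by omega)
    have h2 : n * n = n^2 := by ring
    omega
  -- mod 3 facts
  have hn4m : n = 2 * 4 ^ m := by
    rw [hpow, show 2*m+1 = 1+2*m from by ring, pow_add, pow_mul]; norm_num
  have h4m3 : (4:ℕ) ^ m % 3 = 1 := by rw [Nat.pow_mod]; norm_num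
  have hn3 : n % 3 = 2 := by rw [hn4m, Nat.mul_mod, h4m3]
  have hsq3 : n ^ 2 % 3 = 1 := by rw [pow_two, Nat.mul_mod, hn3]
  have hq3 : n ^ 4 % 3 = 1 := by
    rw [show (n:ℕ)^4 = n^2 * n^2 from by ring, Nat.mul_mod, hsq3]
  -- mod 9 facts
  have h9 : n % 9 = 2 ∨ n % 9 = 5 ∨ n % 9 = 8 := by
    have h6 : (2*m+1) % 6 = 1 ∨ (2*m+1) % 6 = 3 ∨ (2*m+1) % 6 = 5 := by omega
    rw [hpow, pow2mod9]
    rcases h6 with h|h|h <;> rw [h] <;> norm_num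
  have hsq9 : n ^ 2 % 9 = (n % 9) * (n % 9) % 9 := by rw [pow_two, Nat.mul_mod]
  -- atoms
  obtain ⟨a, ha⟩ : ∃ x, n - 1 = x := ⟨_, rfl⟩
  obtain ⟨c, hc⟩ : ∃ x, n ^ 2 + 1 = x := ⟨_, rfl⟩
  obtain ⟨e, he⟩ : ∃ x, n ^ 2 - n + 1 = x := ⟨_, rfl⟩
  obtain ⟨f, hf⟩ : ∃ x, n ^ 4 - n ^ 2 + 1 = x := ⟨_, rfl⟩
  obtain ⟨p, hp⟩ : ∃ x, u1 m = x := ⟨_, rfl⟩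
  obtain ⟨q, hq⟩ : ∃ x, u2 m = x := ⟨_, rfl⟩
  obtain ⟨r1, hr1⟩ : ∃ x, w1 m = x := ⟨_, rfl⟩
  obtain ⟨r2, hr2⟩ : ∃ x, w2 m = x := ⟨_, rfl⟩
  have han : a + 1 = n := by omega
  have hce : c = e + n := by omega
  have hfc : f + n ^ 2 = n ^ 4 + 1 := by omega
  have hpe : p + s m = n + 1 := by
    rw [← hp]; show Q m - s m + 1 + s m = n + 1
    rw [hn]; omega
  have hqe : q = n + s m + 1 := by rw [← hq, ← hn]; rfl
  have hsb : s m * (n + 1) ≤ n ^ 2 + n := by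
    have h1 : s m * (n+1) ≤ n * (n+1) := Nat.mul_le_mul_right _ (by omega)
    have h2 : n * (n+1) = n^2 + n := by ring
    omega
  have hsb2 : 2 * (s m * (n + 1)) ≤ n ^ 2 + n := by
    have h1 : (2 * s m) * (n+1) ≤ n * (n+1) := Nat.mul_le_mul_right _ hsn
    have h2 : n * (n+1) = n^2 + n := by ring
    have h3 : (2 * s m) * (n+1) = 2 * (s m * (n+1)) := by ring
    omega
  have h2sb : 2 ∣ s m * (n + 1) := h2s.mul_right _
  have hw1n : w1 m = n ^ 2 + n + 1 - s m * (n + 1) := by rw [← hn]; rfl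
  have hr1e : r1 + s m * (n + 1) = n ^ 2 + n + 1 := by rw [← hr1, hw1n]; omega
  have hr2e : r2 = n ^ 2 + n + 1 + s m * (n + 1) := by rw [← hr2, ← hn]; rfl
  -- 3 divisibility, k and j
  obtain ⟨k, hk⟩ : ∃ k, n + 1 = 3 * k := ⟨(n+1)/3, by omega⟩
  obtain ⟨j, hj⟩ : ∃ j, e = 3 * j := ⟨e/3, by omega⟩
  have h9e : e % 9 = 3 := by rcases h9 with h|h|h <;> rw [h] at hsq9 <;> omega
  have hj3 : j % 3 ≠ 0 := by omega
  -- positivity / lower bounds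
  have hp2 : 2 ≤ p := by omega
  have hq2 : 2 ≤ q := by omega
  have hr12 : 2 ≤ r1 := by omega
  have hr22 : 2 ≤ r2 := by omega
  have hf2 : 2 ≤ f := by omega
  have hj2 : 2 ≤ j := by omega
  have ha2 : 2 ≤ a := by omega
  have hc2 : 2 ≤ c := by omega
  have hk1 : 1 ≤ k := by omega
  -- parity
  have hao : a % 2 = 1 := by omega
  have hbo : (n + 1) % 2 = 1 := by omega
  have hco : c % 2 = 1 := by omega
  have heo : e % 2 = 1 := by omega
  have hfo : f % 2 = 1 := by omega
  have hpo : p % 2 = 1 := by omega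
  have hqo : q % 2 = 1 := by omega
  have hr1o : r1 % 2 = 1 := by omega
  have hr2o : r2 % 2 = 1 := by omega
  -- mod 3 of atoms
  have ha3 : a % 3 = 1 := by omega
  have hc3 : c % 3 = 2 := by omega
  have hf3 : f % 3 = 1 := by omega

  -- product identities
  have hna : n * a + n = n ^ 2 := by rw [← han]; ring
  have hena : e = n * a + 1 := by omega
  have hfab : n * (n * a * (n + 1)) + n ^ 2 = n ^ 4 := by rw [← han]; ring
  have hfnab : f = n * (n * a * (n + 1)) + 1 := by omega
  have hcaux : a * (n + 1) + 1 = n ^ 2 := by rw [← han]; ring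
  have hcab : c = 2 + a * (n + 1) := by omega
  have hcbb : c = 2 + (n + 1) * a := by rw [hcab]; ring
  obtain ⟨t, ht⟩ : ∃ t, n = t + 2 := ⟨n - 2, by omega⟩
  have hebt0 : (n + 1) * t + 3 + n = n ^ 2 + 1 := by rw [ht]; ring
  have heb : e = 3 + (n + 1) * t := by omega
  obtain ⟨t2, ht2⟩ : ∃ x, n ^ 2 = x + 2 := ⟨n ^ 2 - 2, by omega⟩
  have hcft0 : c * t2 + 3 + n ^ 2 = n ^ 4 + 1 := by
    have h4 : (n:ℕ) ^ 4 = n ^ 2 * n ^ 2 := by ring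
    rw [h4, ← hc, ht2]; ring
  have hcf : f = 3 + c * t2 := by omega
  have hq' : q = p + 2 * s m := by omega
  have hpq0 : p * q + s m * s m = (n + 1) * (n + 1) := by rw [hq', ← hpe]; ring
  have hpq : p * q = c := by
    have h1 : (n+1)*(n+1) = n^2 + 2*n + 1 := by ring
    omega
  have hr2' : r2 = r1 + 2 * (s m * (n + 1)) := by omega
  have hw0 : r1 * r2 + (s m * (n+1)) * (s m * (n+1)) = (n^2+n+1) * (n^2+n+1) := by
    rw [hr2', ← hr1e]; ring
  have hw1s : (s m * (n+1)) * (s m * (n+1)) = 2*n^3 + 4*n^2 + 2*n := by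
    rw [mul_mul_mul_comm, hss]; ring
  have hw2s : (n^2+n+1) * (n^2+n+1) = n^4 + 2*n^3 + 3*n^2 + 2*n + 1 := by ring
  have hw : r1 * r2 = f := by omega
  -- coprimality library
  have cEna : Nat.Coprime e (n * a) := by rw [hena]; exact copsucc (n * a)
  have cEn : Nat.Coprime e n := cEna.coprime_dvd_right (dvd_mul_right n a)
  have cEa : Nat.Coprime e a := cEna.coprime_dvd_right (dvd_mul_left a n)
  have cFbig : Nat.Coprime f (n * (n * a * (n + 1))) := by rw [hfnab]; exact copsucc _
  have cFn : Nat.Coprime f n := cFbig.coprime_dvd_right (dvd_mul_right n _)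
  have cFa : Nat.Coprime f a := cFbig.coprime_dvd_right ⟨n * (n * (n + 1)), by ring⟩
  have cFb : Nat.Coprime f (n + 1) := cFbig.coprime_dvd_right ⟨n * (n * a), by ring⟩
  have cCn : Nat.Coprime c n := by
    have h0 : c = n * n + 1 := by rw [← hc]; ring
    rw [h0]
    exact (copsucc (n*n)).coprime_dvd_right (dvd_mul_right n n)
  have cCa : Nat.Coprime c a := by
    rw [hcab]; exact (Nat.coprime_add_mul_left_left 2 a (n+1)).mpr (cop2 hao)
  have cCb : Nat.Coprime c (n + 1) := by
    rw [hcbb]; exact (Nat.coprime_add_mul_left_left 2 (n+1) a).mpr (cop2 hbo)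
  have cCe : Nat.Coprime c e := by
    rw [show c = n + e from by omega]
    exact (Nat.coprime_add_self_left).mpr cEn.symm
  have cFc : Nat.Coprime f c := by
    rw [hcf]
    exact (Nat.coprime_add_mul_left_left 3 c t2).mpr (cop3 (by omega))
  have cF3 : Nat.Coprime f 3 := (cop3 (by omega)).symm
  have cC3 : Nat.Coprime c 3 := (cop3 (by omega)).symm
  have cA3 : Nat.Coprime a 3 := (cop3 (by omega)).symm
  have hkd : k ∣ n + 1 := ⟨3, by omega⟩
  have hjd : j ∣ e := ⟨3, by omega⟩
  have hgbe : Nat.gcd (n + 1) e = 3 := by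
    rw [heb, Nat.gcd_add_mul_left_right (n+1) 3 t]
    exact Nat.gcd_eq_right ⟨k, hk⟩
  have cJK : Nat.Coprime j k := by
    have hd3 : Nat.gcd j k ∣ 3 := by
      rw [← hgbe]
      exact Nat.dvd_gcd ((Nat.gcd_dvd_right j k).trans hkd) ((Nat.gcd_dvd_left j k).trans hjd)
    rcases (Nat.prime_three.eq_one_or_self_of_dvd _ hd3) with h|h
    · exact h
    · exfalso
      have h3j : (3:ℕ) ∣ j := h ▸ Nat.gcd_dvd_left j k
      omega
  have cJ3 : Nat.Coprime j 3 := (cop3 (by omega)).symm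
  have cJn : Nat.Coprime j n := cEn.coprime_dvd_left hjd
  have cJa : Nat.Coprime j a := cEa.coprime_dvd_left hjd
  have cJc : Nat.Coprime j c := (cCe.symm).coprime_dvd_left hjd
  have hpc : p ∣ c := ⟨q, hpq.symm⟩
  have hqc : q ∣ c := ⟨p, by rw [← hpq]; ring⟩
  have cPQ : Nat.Coprime p q := by
    rw [show q = 2 * s m + p from by omega]
    refine (Nat.coprime_add_self_right).mpr ?_
    rw [show 2 * s m = 2 ^ (m + 2) from by rw [hspow]; ring]
    exact Nat.Coprime.pow_right _ ((cop2 hpo).symm)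
  have cCk : Nat.Coprime c k := cCb.coprime_dvd_right hkd
  have cFk : Nat.Coprime f k := cFb.coprime_dvd_right hkd
  -- X
  obtain ⟨X, hXd⟩ : ∃ x, 3 * (n^2 * a^2 * k^2 * c^2) = x := ⟨_, rfl⟩
  have hXnum : n^2 * a^2 * (n+1)^2 * c^2 = 3 * X := by rw [← hXd, hk]; ring
  have hX : n ^ 2 * a ^ 2 * (n + 1) ^ 2 * c ^ 2 / 3 = X := by
    rw [hXnum]; exact Nat.mul_div_cancel_left X (by norm_num)
  have hP1 : 0 < n^2 * a^2 * k^2 * c^2 := by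
    have h1 : 0 < n^2 := pow_pos (by omega) 2
    have h2 : 0 < a^2 := pow_pos (by omega) 2
    have h3 : 0 < k^2 := pow_pos (by omega) 2
    have h4 : 0 < c^2 := pow_pos (by omega) 2
    exact Nat.mul_pos (Nat.mul_pos (Nat.mul_pos h1 h2) h3) h4
  have hXpos : 0 < X := by rw [← hXd]; omega
  have hX3 : 3 ≤ X := by
    rw [← hXd]
    calc (3:ℕ) = 3 * 1 := by norm_num
    _ ≤ 3 * (n^2*a^2*k^2*c^2) := Nat.mul_le_mul_left 3 hP1
  have copX : ∀ g : ℕ, Nat.Coprime g 3 → Nat.Coprime g n → Nat.Coprime g a →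
      Nat.Coprime g k → Nat.Coprime g c → Nat.Coprime g X := by
    intro g h3 hn' ha' hk' hc'
    rw [← hXd]
    exact h3.mul_right ((((hn'.pow_right 2).mul_right (ha'.pow_right 2)).mul_right
      (hk'.pow_right 2)).mul_right (hc'.pow_right 2))
  have cFX : Nat.Coprime f X := copX f cF3 cFn cFa cFk cFc
  have hr1f : r1 ∣ f := ⟨r2, hw.symm⟩
  have hr2f : r2 ∣ f := ⟨r1, by rw [← hw]; ring⟩
  have cR1X : Nat.Coprime r1 X := cFX.coprime_dvd_left hr1f
  have cR2X : Nat.Coprime r2 X := cFX.coprime_dvd_left hr2f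
  have cJX : Nat.Coprime j X := copX j cJ3 cJn cJa cJK cJc
  have dAX : a ∣ X := ⟨3*(n^2*a*(k^2*c^2)), by rw [← hXd]; ring⟩
  have dBX : (n+1) ∣ X := ⟨n^2*a^2*k*c^2, by rw [← hXd, hk]; ring⟩
  have dCX : c ∣ X := ⟨3*(n^2*a^2*k^2*c), by rw [← hXd]; ring⟩
  have dNX : n ∣ X := ⟨3*(n*a^2*k^2*c^2), by rw [← hXd]; ring⟩
  have dPX : p ∣ X := hpc.trans dCX
  have dQX : q ∣ X := hqc.trans dCX
  have dCCX : c * c ∣ X := ⟨3*(n^2*a^2*k^2), by rw [← hXd]; ring⟩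
  have dNNX : n * n ∣ X := ⟨3*(a^2*k^2*c^2), by rw [← hXd]; ring⟩
  have dPPX : p * p ∣ X := ⟨3*(n^2*a^2*k^2*(q*q)), by rw [← hXd, ← hpq]; ring⟩
  have dQQX : q * q ∣ X := ⟨3*(n^2*a^2*k^2*(p*p)), by rw [← hXd, ← hpq]; ring⟩
  -- derived coprimality (orientations used in cases)
  have cAn : Nat.Coprime a n := by rw [← han]; exact (copsucc a).symm
  have cAB : Nat.Coprime a (n+1) := by
    rw [show n + 1 = 2 + a from by omega]
    exact (Nat.coprime_add_self_right).mpr ((cop2 hao).symm)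
  have cAc : Nat.Coprime a c := cCa.symm
  have cAe : Nat.Coprime a e := cEa.symm
  have cAf : Nat.Coprime a f := cFa.symm
  have cBn : Nat.Coprime (n+1) n := copsucc n
  have cBa : Nat.Coprime (n+1) a := cAB.symm
  have cBc : Nat.Coprime (n+1) c := cCb.symm
  have cBf : Nat.Coprime (n+1) f := cFb.symm
  have cCf : Nat.Coprime c f := cFc.symm
  have cQn : Nat.Coprime q n := cCn.coprime_dvd_left hqc
  have cQa : Nat.Coprime q a := cCa.coprime_dvd_left hqc
  have cQb : Nat.Coprime q (n+1) := cCb.coprime_dvd_left hqc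
  have cQe : Nat.Coprime q e := cCe.coprime_dvd_left hqc
  have cQf : Nat.Coprime q f := cCf.coprime_dvd_left hqc
  have cQr1 : Nat.Coprime q r1 := cQf.coprime_dvd_right hr1f
  have cQr2 : Nat.Coprime q r2 := cQf.coprime_dvd_right hr2f
  have cQp : Nat.Coprime q p := cPQ.symm
  have cPn : Nat.Coprime p n := cCn.coprime_dvd_left hpc
  have cPa : Nat.Coprime p a := cCa.coprime_dvd_left hpc
  have cPb : Nat.Coprime p (n+1) := cCb.coprime_dvd_left hpc
  have cPe : Nat.Coprime p e := cCe.coprime_dvd_left hpc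
  have cPf : Nat.Coprime p f := cCf.coprime_dvd_left hpc
  have cPr1 : Nat.Coprime p r1 := cPf.coprime_dvd_right hr1f
  have cPr2 : Nat.Coprime p r2 := cPf.coprime_dvd_right hr2f
  have cCr1 : Nat.Coprime c r1 := cCf.coprime_dvd_right hr1f
  have cCr2 : Nat.Coprime c r2 := cCf.coprime_dvd_right hr2f
  have cC2m : Nat.Coprime c (2 ^ m) := ((cop2 hco).symm).pow_right m
  have cQ2m : Nat.Coprime q (2 ^ m) := ((cop2 hqo).symm).pow_right m
  have cP2m : Nat.Coprime p (2 ^ m) := ((cop2 hpo).symm).pow_right m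
  have copNodd : ∀ B : ℕ, Nat.Coprime 2 B → Nat.Coprime n B := by
    intro B h; rw [hpow]; exact h.pow_left _
  simp only [D, Set.mem_insert_iff, Set.mem_singleton_iff, hn, ha, hc, he, hf, hp, hq, hr1, hr2, hs2, hX] at hd ⊢
  exact main_cases m hm n hn hpow hspow hn8 h2n h2s hsn hss hz hs2 hle1 hle2 hn2sq h2n2 h2n4 hle2' hle1' hn4m h4m3 hn3 hsq3 hq3 h9 hsq9 a ha c hc e he f hf p hp q hq r1 hr1 r2 hr2 han hce hfc hpe hqe hsb hsb2 h2sb hw1n hr1e hr2e k hk j hj h9e hj3 hp2 hq2 hr12 hr22 hf2 hj2 ha2 hc2 hk1 hao hbo hco heo hfo hpo hqo hr1o hr2o ha3 hc3 hf3 hna hena hfab hfnab hcaux hcab hcbb t ht hebt0 heb t2 ht2 hcft0 hcf hq' hpq0 hpq hr2' hw0 hw1s hw2s hw cEna cEn cEa cFbig cFn cFa cFb cCn cCa cCb cCe cFc cF3 cC3 cA3 hkd hjd hgbe cJK cJ3 cJn cJa cJc hpc hqc cPQ cCk cFk X hXd hXnum hX hP1 hXpos hX3 copX cFX hr1f hr2f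 cR1X cR2X cJX dAX dBX dCX dNX dPX dQX dCCX dNNX dPPX dQQX cAn cAB cAc cAe cAf cBn cBa cBc cBf cCf cQn cQa cQb cQe cQf cQr1 cQr2 cQp cPn cPa cPb cPe cPf cPr1 cPr2 cCr1 cCr2 cC2m cQ2m cP2m copNodd d hd
end

section
/- Neither Q^4(Q^4 + 1) nor Q^4(Q^4 - 1) belongs to D. (These are the values q^8(q^8 + 1) and q^8(q^8 - 1), the degrees of certain unipotent characters of L3^ε(q^8) and L4^ε(q^4), which the paper shows are not character degrees of 2F4(q^2).) -/
open Ree2F4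

private lemma Q_eq (m : ℕ) : Q m = 2 * (2 ^ m) ^ 2 := by unfold Q; ring

private lemma s_half (m : ℕ) : s m / 2 = 2 ^ m := by
  unfold s; rw [pow_succ]; exact Nat.mul_div_cancel _ (by norm_num)

private lemma evenQ (m : ℕ) : Even (Q m) := ⟨(2 ^ m) ^ 2, by rw [Q_eq]; ring⟩
private lemma evenS (m : ℕ) : Even (s m) := ⟨2 ^ m, by unfold s; rw [pow_succ]; ring⟩
private lemma evenQ2 (m : ℕ) : Even ((Q m) ^ 2) := ⟨2 * (2 ^ m) ^ 4, by rw [Q_eq]; ring⟩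
private lemma evenQ4 (m : ℕ) : Even ((Q m) ^ 4) := ⟨8 * (2 ^ m) ^ 8, by rw [Q_eq]; ring⟩
private lemma Qpos (m : ℕ) : 1 ≤ Q m := Nat.one_le_two_pow
private lemma QleQ2 (m : ℕ) : Q m ≤ (Q m) ^ 2 := Nat.le_self_pow (by norm_num) _
private lemma Q2leQ4 (m : ℕ) : (Q m) ^ 2 ≤ (Q m) ^ 4 :=
  Nat.pow_le_pow_right (Qpos m) (by norm_num)
private lemma sleQ (m : ℕ) : s m ≤ Q m :=
  Nat.pow_le_pow_right (by norm_num) (by omega)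

private lemma odd_A1 (m : ℕ) : Odd (Q m - 1) := Nat.Even.sub_odd (Qpos m) (evenQ m) odd_one
private lemma odd_A2 (m : ℕ) : Odd (Q m + 1) := (evenQ m).add_one
private lemma odd_A3 (m : ℕ) : Odd ((Q m) ^ 2 + 1) := (evenQ2 m).add_one
private lemma odd_A4 (m : ℕ) : Odd ((Q m) ^ 2 - Q m + 1) :=
  (((Nat.even_sub (QleQ2 m)).mpr (iff_of_true (evenQ2 m) (evenQ m)))).add_one
private lemma odd_A5 (m : ℕ) : Odd ((Q m) ^ 4 - (Q m) ^ 2 + 1) :=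
  (((Nat.even_sub (Q2leQ4 m)).mpr (iff_of_true (evenQ4 m) (evenQ2 m)))).add_one
private lemma odd_u1 (m : ℕ) : Odd (u1 m) := by
  unfold u1
  exact (((Nat.even_sub (sleQ m)).mpr (iff_of_true (evenQ m) (evenS m)))).add_one
private lemma odd_u2 (m : ℕ) : Odd (u2 m) := by
  unfold u2
  exact ((evenQ m).add (evenS m)).add_one
private lemma odd_w1 (m : ℕ) : Odd (w1 m) := by
  unfold w1
  have h1 : s m * (Q m + 1) ≤ Q m * (Q m + 1) := mul_le_mul_left (sleQ m) _
  have h2 : Q m * (Q m + 1) = (Q m) ^ 2 + Q m := by ring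
  exact Nat.Odd.sub_even (by omega) (((evenQ2 m).add (evenQ m)).add_one)
    ((evenS m).mul_right _)
private lemma odd_w2 (m : ℕ) : Odd (w2 m) :=
  (((evenQ2 m).add (evenQ m)).add_one).add_even ((evenS m).mul_right _)

private lemma Qmod3 (m : ℕ) : Q m % 3 = 2 := by
  induction m with
  | zero => norm_num [Q]
  | succ k ih =>
    have h : Q (k + 1) = Q k * 4 := by
      unfold Q; rw [show 2 * (k + 1) + 1 = (2 * k + 1) + 2 by ring, pow_add]; norm_num
    omega

private lemma div3_A2 (m : ℕ) : 3 ∣ Q m + 1 := by have := Qmod3 m; omega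

private lemma div3_A4 (m : ℕ) : 3 ∣ (Q m) ^ 2 - Q m + 1 := by
  obtain ⟨k, hk⟩ : ∃ k, Q m = 3 * k + 2 := ⟨Q m / 3, by have := Qmod3 m; omega⟩
  have h2 : (Q m) ^ 2 = 3 * (3 * k ^ 2 + 4 * k + 1) + 1 := by rw [hk]; ring
  have h3 := QleQ2 m
  omega

private lemma pow2_inj {a b K L : ℕ} (hK : Odd K) (hL : Odd L)
    (h : 2 ^ a * K = 2 ^ b * L) : a = b := by
  rw [Nat.odd_iff] at hK hL
  by_contra hne
  rcases Nat.lt_or_ge a b with hab | hab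
  · have h2 : (2 : ℕ) ^ b = 2 ^ a * 2 ^ (b - a) := by rw [← pow_add]; congr 1; omega
    rw [h2, mul_assoc] at h
    have h3 : K = 2 ^ (b - a) * L := Nat.eq_of_mul_eq_mul_left (pow_pos (by norm_num) a) h
    obtain ⟨c, hc⟩ : (2 : ℕ) ∣ 2 ^ (b - a) := dvd_pow_self 2 (by omega)
    rw [hc, mul_assoc] at h3
    omega
  · have hba : b < a := by omega
    have h2 : (2 : ℕ) ^ a = 2 ^ b * 2 ^ (a - b) := by rw [← pow_add]; congr 1; omega
    rw [h2, mul_assoc] at h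
    have h3 : 2 ^ (a - b) * K = L := Nat.eq_of_mul_eq_mul_left (pow_pos (by norm_num) b) h
    obtain ⟨c, hc⟩ : (2 : ℕ) ∣ 2 ^ (a - b) := dvd_pow_self 2 (by omega)
    rw [hc, mul_assoc] at h3
    omega

set_option maxHeartbeats 4000000 in
private lemma key (m : ℕ) (x : ℕ) (hx : x ∈ D m) :
    ∃ a K, x = 2 ^ a * K ∧ Odd K ∧ a ≠ 8 * m + 4 := by
  have hQ := Q_eq m
  have hs2 := s_half m
  have odd3 : Odd 3 := ⟨1, rfl⟩
  obtain ⟨t, ht0⟩ := div3_A4 m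
  obtain ⟨r, hr0⟩ := div3_A2 m
  have orr : Odd r := by
    have h := odd_A2 m; rw [Nat.odd_iff] at h ⊢; omega
  have ot : Odd t := by
    have h := odd_A4 m; rw [Nat.odd_iff] at h ⊢; omega
  simp only [D, Set.mem_insert_iff, Set.mem_singleton_iff] at hx
  obtain ⟨A5, hA5⟩ : ∃ y, (Q m) ^ 4 - (Q m) ^ 2 + 1 = y := ⟨_, rfl⟩
  obtain ⟨A4, hA4⟩ : ∃ y, (Q m) ^ 2 - Q m + 1 = y := ⟨_, rfl⟩
  obtain ⟨A1, hA1⟩ : ∃ y, Q m - 1 = y := ⟨_, rfl⟩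
  have oA1 : Odd A1 := hA1 ▸ odd_A1 m
  have oA2 : Odd (Q m + 1) := odd_A2 m
  have oA3 : Odd ((Q m) ^ 2 + 1) := odd_A3 m
  have oA4 : Odd A4 := hA4 ▸ odd_A4 m
  have oA5 : Odd A5 := hA5 ▸ odd_A5 m
  have ou1 : Odd (u1 m) := odd_u1 m
  have ou2 : Odd (u2 m) := odd_u2 m
  have ow1 : Odd (w1 m) := odd_w1 m
  have ow2 : Odd (w2 m) := odd_w2 m
  have hA4t : A4 = 3 * t := by rw [← hA4]; exact ht0
  rw [hA5, hA4, hA1] at hx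
  rcases hx with h|h|h|h|h|h|h|h|h|h|h|h|h|h|h|h|h|h|h|h|h|h|h|h|h|h|h|h|h|h|h|h|h|h|h|h|h|h|h|h|h|h|h
  · refine ⟨0, 1, ?_, odd_one, by omega⟩
    rw [h]
    ring
  · refine ⟨m, A1 * (Q m + 1) ^ 2 * A4, ?_, (oA1.mul oA2.pow).mul oA4, by omega⟩
    rw [h, hs2]
    ring
  · refine ⟨2 * m + 1, A4 * A5, ?_, oA4.mul oA5, by omega⟩
    rw [h, hQ]
    ring
  · refine ⟨0, A1 * ((Q m) ^ 2 + 1) ^ 2 * A5, ?_, (oA1.mul oA3.pow).mul oA5, by omega⟩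
    rw [h]
    ring
  · refine ⟨4 * m, u1 m ^ 2 * w1 m * A1 ^ 2 * t, ?_, ((ou1.pow.mul ow1).mul oA1.pow).mul ot, by omega⟩
    rw [h]
    refine Nat.div_eq_of_eq_mul_left (by norm_num) ?_
    rw [hQ, hA4t]
    ring
  · refine ⟨4 * m, u2 m ^ 2 * w2 m * A1 ^ 2 * t, ?_, ((ou2.pow.mul ow2).mul oA1.pow).mul ot, by omega⟩
    rw [h]
    refine Nat.div_eq_of_eq_mul_left (by norm_num) ?_
    rw [hQ, hA4t]
    ring
  · refine ⟨4 * m + 1, 3 * r ^ 2 * A1 ^ 2 * A5, ?_, ((odd3.mul orr.pow).mul oA1.pow).mul oA5, by omega⟩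
    rw [h]
    refine Nat.div_eq_of_eq_mul_left (by norm_num) ?_
    rw [hr0, hQ]
    ring
  · refine ⟨4 * m, w1 m * A1 ^ 2 * (Q m + 1) ^ 2 * A4, ?_, ((ow1.mul oA1.pow).mul oA2.pow).mul oA4, by omega⟩
    rw [h]
    refine Nat.div_eq_of_eq_mul_left (by norm_num) ?_
    rw [hQ]
    ring
  · refine ⟨4 * m, u1 m ^ 2 * w2 m * (Q m + 1) ^ 2 * A4, ?_, ((ou1.pow.mul ow2).mul oA2.pow).mul oA4, by omega⟩
    rw [h]
    refine Nat.div_eq_of_eq_mul_left (by norm_num) ?_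
    rw [hQ]
    ring
  · refine ⟨4 * m, w2 m * A1 ^ 2 * (Q m + 1) ^ 2 * A4, ?_, ((ow2.mul oA1.pow).mul oA2.pow).mul oA4, by omega⟩
    rw [h]
    refine Nat.div_eq_of_eq_mul_left (by norm_num) ?_
    rw [hQ]
    ring
  · refine ⟨4 * m, u2 m ^ 2 * w1 m * (Q m + 1) ^ 2 * A4, ?_, ((ou2.pow.mul ow1).mul oA2.pow).mul oA4, by omega⟩
    rw [h]
    refine Nat.div_eq_of_eq_mul_left (by norm_num) ?_
    rw [hQ]
    ring
  · refine ⟨4 * m + 2, A1 ^ 2 * t * A5, ?_, (oA1.pow.mul ot).mul oA5, by omega⟩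
    rw [h]
    refine Nat.div_eq_of_eq_mul_left (by norm_num) ?_
    rw [hQ, hA4t]
    ring
  · refine ⟨4 * m + 2, 3 * r ^ 2 * A1 ^ 2 * ((Q m) ^ 2 + 1) ^ 2, ?_, ((odd3.mul orr.pow).mul oA1.pow).mul oA3.pow, by omega⟩
    rw [h]
    refine Nat.div_eq_of_eq_mul_left (by norm_num) ?_
    rw [hr0, hQ]
    ring
  · refine ⟨4 * m + 1, ((Q m) ^ 2 + 1) ^ 2 * A5, ?_, oA3.pow.mul oA5, by omega⟩
    rw [h]
    refine Nat.div_eq_of_eq_mul_left (by norm_num) ?_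
    rw [hQ]
    ring
  · refine ⟨0, u1 m * A1 * (Q m + 1) ^ 2 * A4 * A5, ?_, (((ou1.mul oA1).mul oA2.pow).mul oA4).mul oA5, by omega⟩
    rw [h]
    ring
  · refine ⟨0, (Q m + 1) ^ 2 * ((Q m) ^ 2 + 1) * A4 * A5, ?_, ((oA2.pow.mul oA3).mul oA4).mul oA5, by omega⟩
    rw [h]
    ring
  · refine ⟨0, u2 m * A1 * (Q m + 1) ^ 2 * A4 * A5, ?_, (((ou2.mul oA1).mul oA2.pow).mul oA4).mul oA5, by omega⟩
    rw [h]
    ring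
  · refine ⟨2 * m + 1, A1 ^ 2 * ((Q m) ^ 2 + 1) ^ 2 * A5, ?_, (oA1.pow.mul oA3.pow).mul oA5, by omega⟩
    rw [h, hQ]
    ring
  · refine ⟨0, A1 * ((Q m) ^ 2 + 1) ^ 2 * A4 * A5, ?_, ((oA1.mul oA3.pow).mul oA4).mul oA5, by omega⟩
    rw [h]
    ring
  · refine ⟨10 * m + 5, A4 * A5, ?_, oA4.mul oA5, by omega⟩
    rw [h, hQ]
    ring
  · refine ⟨0, (Q m + 1) * ((Q m) ^ 2 + 1) ^ 2 * A4 * A5, ?_, ((oA2.mul oA3.pow).mul oA4).mul oA5, by omega⟩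
    rw [h]
    ring
  · refine ⟨m, u1 m * A1 ^ 2 * (Q m + 1) ^ 2 * A4 * A5, ?_, (((ou1.mul oA1.pow).mul oA2.pow).mul oA4).mul oA5, by omega⟩
    rw [h, hs2]
    ring
  · refine ⟨13 * m + 6, A1 * (Q m + 1) ^ 2 * A4, ?_, (oA1.mul oA2.pow).mul oA4, by omega⟩
    rw [h, hs2, hQ]
    ring
  · refine ⟨m, A1 * (Q m + 1) ^ 2 * ((Q m) ^ 2 + 1) * A4 * A5, ?_, (((oA1.mul oA2.pow).mul oA3).mul oA4).mul oA5, by omega⟩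
    rw [h, hs2]
    ring
  · refine ⟨m, u2 m * A1 ^ 2 * (Q m + 1) ^ 2 * A4 * A5, ?_, (((ou2.mul oA1.pow).mul oA2.pow).mul oA4).mul oA5, by omega⟩
    rw [h, hs2]
    ring
  · refine ⟨0, u1 m ^ 2 * A1 ^ 2 * (Q m + 1) ^ 2 * A4 * A5, ?_, (((ou1.pow.mul oA1.pow).mul oA2.pow).mul oA4).mul oA5, by omega⟩
    rw [h]
    ring
  · refine ⟨0, w1 m * A1 ^ 2 * (Q m + 1) ^ 2 * ((Q m) ^ 2 + 1) ^ 2 * A4, ?_, (((ow1.mul oA1.pow).mul oA2.pow).mul oA3.pow).mul oA4, by omega⟩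
    rw [h]
    ring
  · refine ⟨4 * m + 2, u1 m * A1 * (Q m + 1) ^ 2 * A4 * A5, ?_, (((ou1.mul oA1).mul oA2.pow).mul oA4).mul oA5, by omega⟩
    rw [h, hQ]
    ring
  · refine ⟨0, u1 m * A1 * (Q m + 1) ^ 2 * ((Q m) ^ 2 + 1) * A4 * A5, ?_, ((((ou1.mul oA1).mul oA2.pow).mul oA3).mul oA4).mul oA5, by omega⟩
    rw [h]
    ring
  · refine ⟨0, A1 ^ 2 * ((Q m) ^ 2 + 1) ^ 2 * A4 * A5, ?_, ((oA1.pow.mul oA3.pow).mul oA4).mul oA5, by omega⟩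
    rw [h]
    ring
  · refine ⟨2 * m + 1, A1 * ((Q m) ^ 2 + 1) ^ 2 * A4 * A5, ?_, ((oA1.mul oA3.pow).mul oA4).mul oA5, by omega⟩
    rw [h, hQ]
    ring
  · refine ⟨0, A1 ^ 2 * (Q m + 1) ^ 2 * ((Q m) ^ 2 + 1) * A4 * A5, ?_, (((oA1.pow.mul oA2.pow).mul oA3).mul oA4).mul oA5, by omega⟩
    rw [h]
    ring
  · refine ⟨6 * m + 3, A1 * ((Q m) ^ 2 + 1) ^ 2 * A5, ?_, (oA1.mul oA3.pow).mul oA5, by omega⟩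
    rw [h, hQ]
    ring
  · refine ⟨0, A1 * (Q m + 1) * ((Q m) ^ 2 + 1) ^ 2 * A4 * A5, ?_, (((oA1.mul oA2).mul oA3.pow).mul oA4).mul oA5, by omega⟩
    rw [h]
    ring
  · refine ⟨0, A1 ^ 2 * (Q m + 1) ^ 2 * ((Q m) ^ 2 + 1) ^ 2 * A5, ?_, ((oA1.pow.mul oA2.pow).mul oA3.pow).mul oA5, by omega⟩
    rw [h]
    ring
  · refine ⟨24 * m + 12, 1, ?_, odd_one, by omega⟩
    rw [h, hQ]
    ring
  · refine ⟨2 * m + 1, (Q m + 1) * ((Q m) ^ 2 + 1) ^ 2 * A4 * A5, ?_, ((oA2.mul oA3.pow).mul oA4).mul oA5, by omega⟩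
    rw [h, hQ]
    ring
  · refine ⟨4 * m + 2, (Q m + 1) ^ 2 * ((Q m) ^ 2 + 1) * A4 * A5, ?_, ((oA2.pow.mul oA3).mul oA4).mul oA5, by omega⟩
    rw [h, hQ]
    ring
  · refine ⟨0, (Q m + 1) ^ 2 * ((Q m) ^ 2 + 1) ^ 2 * A4 * A5, ?_, ((oA2.pow.mul oA3.pow).mul oA4).mul oA5, by omega⟩
    rw [h]
    ring
  · refine ⟨0, w2 m * A1 ^ 2 * (Q m + 1) ^ 2 * ((Q m) ^ 2 + 1) ^ 2 * A4, ?_, (((ow2.mul oA1.pow).mul oA2.pow).mul oA3.pow).mul oA4, by omega⟩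
    rw [h]
    ring
  · refine ⟨4 * m + 2, u2 m * A1 * (Q m + 1) ^ 2 * A4 * A5, ?_, (((ou2.mul oA1).mul oA2.pow).mul oA4).mul oA5, by omega⟩
    rw [h, hQ]
    ring
  · refine ⟨0, u2 m * A1 * (Q m + 1) ^ 2 * ((Q m) ^ 2 + 1) * A4 * A5, ?_, ((((ou2.mul oA1).mul oA2.pow).mul oA3).mul oA4).mul oA5, by omega⟩
    rw [h]
    ring
  · refine ⟨0, u2 m ^ 2 * A1 ^ 2 * (Q m + 1) ^ 2 * A4 * A5, ?_, (((ou2.pow.mul oA1.pow).mul oA2.pow).mul oA4).mul oA5, by omega⟩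
    rw [h]
    ring

open Ree2F4 in
/-- Neither `q⁸(q⁸+1) = Q⁴(Q⁴+1)` nor `q⁸(q⁸-1) = Q⁴(Q⁴-1)` is a character degree
of `²F₄(q²)`. -/
theorem stmt_14 (m : ℕ) (hm : 1 ≤ m) :
    (Q m) ^ 4 * ((Q m) ^ 4 + 1) ∉ D m ∧ (Q m) ^ 4 * ((Q m) ^ 4 - 1) ∉ D m := by
  have hQ4 : (Q m) ^ 4 = 2 ^ (8 * m + 4) := by rw [Q_eq]; ring
  have h2 : (2 : ℕ) ^ (8 * m + 4) = 2 * 2 ^ (8 * m + 3) := by ring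
  have hpos : 1 ≤ (2 : ℕ) ^ (8 * m + 3) := Nat.one_le_two_pow
  constructor
  · intro hmem
    obtain ⟨a, K, hx, hK, ha⟩ := key m _ hmem
    rw [hQ4] at hx
    have hodd : Odd ((2 : ℕ) ^ (8 * m + 4) + 1) := Nat.odd_iff.mpr (by omega)
    exact ha (pow2_inj hodd hK hx).symm
  · intro hmem
    obtain ⟨a, K, hx, hK, ha⟩ := key m _ hmem
    rw [hQ4] at hx
    have hodd : Odd ((2 : ℕ) ^ (8 * m + 4) - 1) := Nat.odd_iff.mpr (by omega)
    exact ha (pow2_inj hodd hK hx).symm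
end
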